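/- arXiv:1708.04591 — 4 statements merged into one kernel-verified Lean document; each statement's English description precedes it below -/
import Mathlib

section
/- Let G = ⟨X⟩ be a δ-hyperbolic group and let V ∈ X* be a cyclically minimal word with ‖V‖ ≥ 180δ. Then for every k ∈ ℤ, the word V^k is a (4, 2520δ)-quasi-geodesic word in the Cayley graph Γ(G,X). -/
/-- The evaluation in `G` of a word over the alphabet `X`, via `f : X → G`. -/
def evalWord {G : Type*} [Group G] {X : Type*} (f : X → G) (w : List X) : G :=
  (w.map f).prod

/-- The word length of a group element with respect to the generators `f : X → G`. -/
noncomputable def wordLength {G : Type*} [Group G] {X : Type*} (f : X → G) (g : G) : ℕ :=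
  sInf {n : ℕ | ∃ w : List X, w.length = n ∧ evalWord f w = g}

/-- `u` is a (contiguous) subword of `w`. -/
def IsSubword {X : Type*} (u w : List X) : Prop :=
  ∃ v₁ v₂ : List X, w = v₁ ++ u ++ v₂

/-- The word `w` is `(lam, c)`-quasi-geodesic in the Cayley graph `Γ(G, X)`: every
subword `u` of `w` satisfies `‖u‖ ≤ lam * |u|_G + c`. -/
def IsQGWord {G : Type*} [Group G] {X : Type*} (f : X → G) (lam c : ℝ) (w : List X) : Prop :=
  ∀ u : List X, IsSubword u w →
    (u.length : ℝ) ≤ lam * (wordLength f (evalWord f u) : ℝ) + c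

/-- The `k`-th power of a word, for `k : ℕ`. -/
def wordNPow {X : Type*} (w : List X) : ℕ → List X
  | 0 => []
  | n + 1 => w ++ wordNPow w n

/-- The `k`-th power of a word, for `k : ℤ`, using the letter-inversion map `inv`. -/
def wordZPow {X : Type*} (inv : X → X) (w : List X) : ℤ → List X
  | Int.ofNat n => wordNPow w n
  | Int.negSucc n => wordNPow (w.reverse.map inv) (n + 1)

/-- `w` is a cyclically minimal word: its length is minimal among all words representing
elements of `G` conjugate to the element represented by `w`. -/
def CyclicallyMinimal {G : Type*} [Group G] {X : Type*} (f : X → G) (w : List X) : Prop :=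
  ∀ h : G, w.length ≤ wordLength f (h * evalWord f w * h⁻¹)

/-- The Cayley graph of `G` with respect to the generators `f : X → G`. -/
def cayley {G : Type*} [Group G] {X : Type*} (f : X → G) : SimpleGraph G where
  Adj g h := g ≠ h ∧ ∃ x : X, g * f x = h ∨ h * f x = g
  symm := by constructor; rintro g h ⟨hne, x, hx⟩; exact ⟨hne.symm, x, hx.symm⟩
  loopless := by constructor; rintro g ⟨hne, -⟩; exact hne rfl

/-- All geodesic triangles of the graph `Γ` are `δ`-slim: every vertex of any side is
within distance `δ` of the union of the other two sides. -/
def SlimTriangles {V : Type*} (Γ : SimpleGraph V) (δ : ℕ) : Prop :=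
  ∀ (a b c : V) (p : Γ.Walk a b) (q : Γ.Walk b c) (r : Γ.Walk a c),
    p.length = Γ.dist a b → q.length = Γ.dist b c → r.length = Γ.dist a c →
    ∀ u ∈ p.support, ∃ v, (v ∈ q.support ∨ v ∈ r.support) ∧ Γ.dist u v ≤ δ

/-!
Subwords of `V^k` of length at most `‖V‖` are subwords of cyclic permutations of `V^{±1}`, and
these are geodesic because `V` is cyclically minimal; so the vertices `P i` of the path labelled
by a subword `u` of `V^k` form a `180 δ`-local geodesic in the Cayley graph. Two slim triangles
show that a local geodesic stays `4 δ`-close to a geodesic `r` joining its endpoints. Projecting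
the points `P (80 δ i)` to `r` then gives points advancing along `r` by at least `72 δ` at each
step, whence `‖u‖ ≤ 2 |u|_G + 80 δ`.
-/

open SimpleGraph

namespace SimpleGraph

variable {V : Type*} {Γ : SimpleGraph V}

theorem dist_add_dist_of_mem_support {x y u : V} {p : Γ.Walk x y} (hp : p.length = Γ.dist x y)
    (hu : u ∈ p.support) : Γ.dist x u + Γ.dist u y = Γ.dist x y := by
  obtain ⟨q, r, rfl⟩ := Walk.mem_support_iff_exists_append.mp hu
  rw [← length_eq_dist_of_subwalk hp (Walk.isSubwalk_of_append_left rfl),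
    ← length_eq_dist_of_subwalk hp (Walk.isSubwalk_of_append_right rfl), ← hp,
    Walk.length_append]

theorem dist_add_dist_or_of_mem_support {x y u v : V} {p : Γ.Walk x y}
    (hp : p.length = Γ.dist x y) (hu : u ∈ p.support) (hv : v ∈ p.support) :
    Γ.dist x u + Γ.dist u v = Γ.dist x v ∨ Γ.dist x v + Γ.dist u v = Γ.dist x u := by
  obtain ⟨q, r, rfl⟩ := Walk.mem_support_iff_exists_append.mp hu
  have hq := length_eq_dist_of_subwalk hp (Walk.isSubwalk_of_append_left rfl)
  have hr := length_eq_dist_of_subwalk hp (Walk.isSubwalk_of_append_right rfl)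
  rcases (Walk.mem_support_append_iff _ _).mp hv with hvq | hvr
  · have := dist_add_dist_of_mem_support hq hvq
    rw [dist_comm (u := v)] at this
    exact .inr this
  · have := dist_add_dist_of_mem_support hr hvr
    have := dist_add_dist_of_mem_support hp hv
    rw [Walk.length_append] at hp
    exact .inl (by omega)

theorem exists_geodesic_subwalk {x y u v : V} {p : Γ.Walk x y} (hp : p.length = Γ.dist x y)
    (hu : u ∈ p.support) (hv : v ∈ p.support) :
    ∃ q : Γ.Walk u v, q.length = Γ.dist u v ∧ q.support ⊆ p.support := by
  obtain ⟨q, r, rfl⟩ := Walk.mem_support_iff_exists_append.mp hu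
  rcases (Walk.mem_support_append_iff _ _).mp hv with hvq | hvr
  · obtain ⟨q₁, q₂, rfl⟩ := Walk.mem_support_iff_exists_append.mp hvq
    have hsub : q₂.IsSubwalk ((q₁.append q₂).append r) :=
      (Walk.isSubwalk_of_append_right rfl).trans (Walk.isSubwalk_of_append_left rfl)
    refine ⟨q₂.reverse, ?_, ?_⟩
    · rw [Walk.length_reverse, length_eq_dist_of_subwalk hp hsub, dist_comm]
    · simpa using hsub.support_subset
  · obtain ⟨r₁, r₂, rfl⟩ := Walk.mem_support_iff_exists_append.mp hvr
    have hsub : r₁.IsSubwalk (q.append (r₁.append r₂)) :=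
      (Walk.isSubwalk_of_append_left rfl).trans (Walk.isSubwalk_of_append_right rfl)
    exact ⟨r₁, length_eq_dist_of_subwalk hp hsub, hsub.support_subset⟩

theorem Connected.exists_geodesic_through (hconn : Γ.Connected) {x y z : V}
    (h : Γ.dist x y + Γ.dist y z = Γ.dist x z) :
    ∃ p : Γ.Walk x z, p.length = Γ.dist x z ∧ y ∈ p.support := by
  obtain ⟨p, hp⟩ := hconn.exists_walk_length_eq_dist x y
  obtain ⟨q, hq⟩ := hconn.exists_walk_length_eq_dist y z
  exact ⟨p.append q, by rw [Walk.length_append, hp, hq, h], by simp⟩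

theorem Walk.exists_mem_support_forall_dist_le {x y : V} (p : Γ.Walk x y) (z : V) :
    ∃ v ∈ p.support, ∀ w ∈ p.support, Γ.dist z v ≤ Γ.dist z w := by
  classical
  obtain ⟨v, hv, hmin⟩ := p.support.toFinset.exists_min_image (Γ.dist z)
    ⟨x, List.mem_toFinset.mpr p.start_mem_support⟩
  exact ⟨v, List.mem_toFinset.mp hv, fun w hw => hmin w (List.mem_toFinset.mpr hw)⟩

theorem Connected.dist_le_add_add (hconn : Γ.Connected) (a b c d : V) :
    Γ.dist a d ≤ Γ.dist a b + Γ.dist b c + Γ.dist c d :=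
  hconn.dist_triangle.trans (Nat.add_le_add_right hconn.dist_triangle _)

theorem Connected.dist_le_of_between (hconn : Γ.Connected) {x y y' v : V}
    (hv : Γ.dist y v + Γ.dist v y' = Γ.dist y y') (hy : Γ.dist y y' ≤ Γ.dist x y') :
    Γ.dist y v ≤ Γ.dist x v := by
  have := hconn.dist_triangle (u := x) (v := v) (w := y')
  omega

theorem mul_le_dist_of_bounded_steps {x y : V} {r : Γ.Walk x y} (hr : r.length = Γ.dist x y)
    {Q : ℕ → V} (hQ : ∀ i, Q i ∈ r.support) {N a b : ℕ} (h₀ : Γ.dist x (Q 0) < a)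
    (h₁ : ∀ i, i + 1 ≤ N → a ≤ Γ.dist (Q i) (Q (i + 1)) ∧ Γ.dist (Q i) (Q (i + 1)) ≤ b)
    (h₂ : ∀ i, i + 2 ≤ N → b - a < Γ.dist (Q i) (Q (i + 2))) :
    ∀ i ≤ N, a * i ≤ Γ.dist x (Q i) := by
  -- The bound on two-step distances forbids a step backwards after a step forwards.
  have forward : ∀ i, i + 1 ≤ N →
      Γ.dist x (Q i) + Γ.dist (Q i) (Q (i + 1)) = Γ.dist x (Q (i + 1)) := by
    intro i
    induction i with
    | zero =>
      intro h
      show Γ.dist x (Q 0) + Γ.dist (Q 0) (Q 1) = Γ.dist x (Q 1)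
      have : a ≤ Γ.dist (Q 0) (Q 1) ∧ Γ.dist (Q 0) (Q 1) ≤ b := h₁ 0 h
      have := dist_add_dist_or_of_mem_support hr (hQ 0) (hQ 1)
      omega
    | succ i ih =>
      intro h
      show Γ.dist x (Q (i + 1)) + Γ.dist (Q (i + 1)) (Q (i + 2)) = Γ.dist x (Q (i + 2))
      have := ih (by omega)
      have := h₁ i (by omega)
      have : a ≤ Γ.dist (Q (i + 1)) (Q (i + 2)) ∧ Γ.dist (Q (i + 1)) (Q (i + 2)) ≤ b :=
        h₁ (i + 1) h
      have := h₂ i h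
      have := dist_add_dist_or_of_mem_support hr (hQ (i + 1)) (hQ (i + 2))
      have := dist_add_dist_or_of_mem_support hr (hQ i) (hQ (i + 2))
      omega
  intro i
  induction i with
  | zero => simp
  | succ i ih =>
    intro h
    have := ih (by omega)
    have := forward i h
    have := (h₁ i h).1
    rw [Nat.mul_succ]
    omega

def IsLocalGeodesic (Γ : SimpleGraph V) (L m : ℕ) (P : ℕ → V) : Prop :=
  ∀ i j, i ≤ j → j ≤ m → j - i ≤ L → Γ.dist (P i) (P j) = j - i

namespace IsLocalGeodesic

variable {L m : ℕ} {P : ℕ → V}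

theorem exists_geodesic_through (hP : Γ.IsLocalGeodesic L m P) (hconn : Γ.Connected)
    {a j b : ℕ} (haj : a ≤ j) (hjb : j ≤ b) (hbm : b ≤ m) (hab : b - a ≤ L) :
    ∃ γ : Γ.Walk (P a) (P b), γ.length = Γ.dist (P a) (P b) ∧ P j ∈ γ.support :=
  hconn.exists_geodesic_through (by
    rw [hP a j haj (by omega) (by omega), hP j b hjb hbm (by omega), hP a b (by omega) hbm hab]
    omega)

variable {δ : ℕ} (hP : Γ.IsLocalGeodesic (180 * δ) m P) (hconn : Γ.Connected)
  (hslim : SlimTriangles Γ δ) (hδ : 0 < δ)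
include hP hconn hslim hδ

/- `c` is the largest distance from a point of `P` to `r`, attained at `P j`. Slim triangles on the
ends `P a`, `P b` of the window of `90 δ` steps around `j` and on their projections to `r` put
`P j` within `2 δ` of `r` or of a side joining an end of the window to its projection; the latter
drags that end within `4 δ` of `P j`, so it is an end of `P` and lies on `r`. -/
theorem le_of_forall_exists_dist_le {r : Γ.Walk (P 0) (P m)} (hr : r.length = Γ.dist (P 0) (P m))
    {j c : ℕ} (hjm : j ≤ m) (hnear : ∀ i ≤ m, ∃ w ∈ r.support, Γ.dist (P i) w ≤ c)
    (hfar : ∀ w ∈ r.support, c ≤ Γ.dist (P j) w) : c ≤ 4 * δ := by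
  by_contra! hc
  set a := j - 90 * δ with ha
  set b := min (j + 90 * δ) m with hb
  have hja : Γ.dist (P j) (P a) = j - a := by
    rw [dist_comm]; exact hP a j (by omega) hjm (by omega)
  have hjb : Γ.dist (P j) (P b) = b - j := hP j b (by omega) (by omega) (by omega)
  have hends : ∀ e, (e = 0 ∨ e = m) → c ≤ Γ.dist (P j) (P e) := by
    rintro e (rfl | rfl)
    exacts [hfar _ r.start_mem_support, hfar _ r.end_mem_support]
  obtain ⟨γ, hγ, hjγ⟩ := hP.exists_geodesic_through hconn (a := a) (j := j) (b := b)
    (by omega) (by omega) (by omega) (by omega)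
  obtain ⟨a', ha'r, ha'⟩ := hnear a (by omega)
  obtain ⟨b', hb'r, hb'⟩ := hnear b (by omega)
  obtain ⟨α, hα⟩ := hconn.exists_walk_length_eq_dist (P a) a'
  obtain ⟨μ, hμ⟩ := hconn.exists_walk_length_eq_dist a' (P b)
  obtain ⟨β, hβ⟩ := hconn.exists_walk_length_eq_dist (P b) b'
  obtain ⟨ρ, hρ, hρr⟩ := exists_geodesic_subwalk hr ha'r hb'r
  obtain ⟨v, hv, hjv⟩ := hslim _ _ _ γ μ.reverse α hγ (by rw [Walk.length_reverse, hμ, dist_comm])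
    hα (P j) hjγ
  rcases hv with hvμ | hvα
  · rw [Walk.support_reverse, List.mem_reverse] at hvμ
    obtain ⟨v₂, hv₂, hvv₂⟩ := hslim _ _ _ μ β ρ hμ hβ hρ v hvμ
    have hjv₂ := hconn.dist_triangle (u := P j) (v := v) (w := v₂)
    rcases hv₂ with hv₂β | hv₂ρ
    · have hbv₂ := hconn.dist_le_of_between (dist_add_dist_of_mem_support hβ hv₂β)
        (hb'.trans (hfar b' hb'r))
      have hjb' := hconn.dist_triangle (u := P j) (v := v₂) (w := P b)
      rw [dist_comm (u := v₂)] at hjb'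
      have := hends b (.inr (by omega))
      omega
    · have := hfar v₂ (hρr hv₂ρ)
      omega
  · have hav := hconn.dist_le_of_between (dist_add_dist_of_mem_support hα hvα)
      (ha'.trans (hfar a' ha'r))
    have hja' := hconn.dist_triangle (u := P j) (v := v) (w := P a)
    rw [dist_comm (u := v)] at hja'
    have := hends a (.inl (by omega))
    omega

theorem exists_mem_support_dist_le {r : Γ.Walk (P 0) (P m)}
    (hr : r.length = Γ.dist (P 0) (P m)) {i : ℕ} (hi : i ≤ m) :
    ∃ w ∈ r.support, Γ.dist (P i) w ≤ 4 * δ := by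
  choose nearest hmem hmin using fun z => r.exists_mem_support_forall_dist_le z
  obtain ⟨j, hj, hmax⟩ := (Finset.range (m + 1)).exists_max_image
    (fun i => Γ.dist (P i) (nearest (P i))) ⟨0, by simp⟩
  simp only [Finset.mem_range, Nat.lt_succ_iff] at hj hmax
  have := hP.le_of_forall_exists_dist_le hconn hslim hδ hr hj
    (fun i hi => ⟨nearest (P i), hmem _, hmax i hi⟩) (hmin (P j))
  exact ⟨nearest (P i), hmem _, (hmax i hi).trans this⟩

theorem le_two_mul_dist_add : m ≤ 2 * Γ.dist (P 0) (P m) + 80 * δ := by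
  obtain ⟨r, hr⟩ := hconn.exists_walk_length_eq_dist (P 0) (P m)
  -- Sample `P` every `s = 80 δ` steps: two consecutive gaps still fit in a geodesic stretch.
  obtain ⟨s, hs⟩ : ∃ s, s = 80 * δ := ⟨_, rfl⟩
  set N := m / s
  have hnear : ∀ i, ∃ w ∈ r.support, i * s ≤ m → Γ.dist (P (i * s)) w ≤ 4 * δ := by
    intro i
    by_cases hi : i * s ≤ m
    · obtain ⟨w, hw, h⟩ := hP.exists_mem_support_dist_le hconn hslim hδ hr hi
      exact ⟨w, hw, fun _ => h⟩
    · exact ⟨P 0, r.start_mem_support, fun h => absurd h hi⟩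
  choose Q hQr hQ using hnear
  have hstep : ∀ i k, i + k ≤ N → k ≤ 2 →
      k * s ≤ Γ.dist (Q i) (Q (i + k)) + 8 * δ ∧ Γ.dist (Q i) (Q (i + k)) ≤ k * s + 8 * δ := by
    intro i k hik hk
    have hikm : (i + k) * s ≤ m :=
      (Nat.mul_le_mul_right s hik).trans (Nat.div_mul_le_self m s)
    have hks : k * s ≤ 2 * s := Nat.mul_le_mul_right s hk
    have hsplit : (i + k) * s = i * s + k * s := Nat.add_mul ..
    have hPP : Γ.dist (P (i * s)) (P ((i + k) * s)) = k * s := by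
      rw [hP _ _ (by omega) hikm (by omega), hsplit, Nat.add_sub_cancel_left]
    have h₁ := hQ i (by omega)
    have h₂ := hQ (i + k) hikm
    have t₁ := hconn.dist_le_add_add (Q i) (P (i * s)) (P ((i + k) * s)) (Q (i + k))
    have t₂ := hconn.dist_le_add_add (P (i * s)) (Q i) (Q (i + k)) (P ((i + k) * s))
    rw [dist_comm (u := Q i) (v := P (i * s))] at t₁
    rw [dist_comm (u := Q (i + k)) (v := P ((i + k) * s))] at t₂
    omega
  have hadvance := mul_le_dist_of_bounded_steps hr hQr (N := N) (a := 72 * δ) (b := 88 * δ)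
    (by simpa using (hQ 0 (by simp)).trans_lt (by omega : 4 * δ < 72 * δ))
    (fun i hi => by have := hstep i 1 hi (by norm_num); omega)
    (fun i hi => by have := hstep i 2 hi le_rfl; omega) N le_rfl
  have hQN := dist_add_dist_of_mem_support hr (hQr N)
  have hm : m < N * s + s := Nat.lt_div_mul_add (by omega)
  rw [mul_assoc] at hadvance
  rw [hs, mul_comm, mul_assoc] at hm
  omega

end IsLocalGeodesic

end SimpleGraph

section Words

variable {G : Type*} [Group G] {X : Type*} {f : X → G}

@[simp]
theorem evalWord_nil : evalWord f [] = 1 := rfl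

@[simp]
theorem evalWord_cons (x : X) (w : List X) : evalWord f (x :: w) = f x * evalWord f w := by
  simp [evalWord]

@[simp]
theorem evalWord_append (a b : List X) : evalWord f (a ++ b) = evalWord f a * evalWord f b := by
  simp [evalWord]

theorem evalWord_reverse_map {inv : X → X} (hinv : ∀ x : X, f (inv x) = (f x)⁻¹)
    (w : List X) : evalWord f (w.reverse.map inv) = (evalWord f w)⁻¹ := by
  induction w with
  | nil => simp
  | cons x t ih =>
    rw [List.reverse_cons, List.map_append, evalWord_append, ih]
    simp [hinv]

theorem wordLength_evalWord_le (w : List X) : wordLength f (evalWord f w) ≤ w.length :=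
  Nat.sInf_le ⟨w, rfl, rfl⟩

theorem exists_length_eq_wordLength (hgen : ∀ g : G, ∃ w : List X, evalWord f w = g) (g : G) :
    ∃ w : List X, w.length = wordLength f g ∧ evalWord f w = g := by
  obtain ⟨w, hw⟩ := hgen g
  exact Nat.sInf_mem (s := {n | ∃ w : List X, w.length = n ∧ evalWord f w = g}) ⟨_, w, rfl, hw⟩

theorem wordLength_mul_le (hgen : ∀ g : G, ∃ w : List X, evalWord f w = g) (g h : G) :
    wordLength f (g * h) ≤ wordLength f g + wordLength f h := by
  obtain ⟨v, hv, rfl⟩ := exists_length_eq_wordLength hgen g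
  obtain ⟨w, hw, rfl⟩ := exists_length_eq_wordLength hgen h
  simpa [hv, hw] using wordLength_evalWord_le (f := f) (v ++ w)

theorem isSubword_iff_isInfix {u w : List X} : IsSubword u w ↔ u <:+: w :=
  ⟨fun ⟨a, b, h⟩ => ⟨a, b, h.symm⟩, fun ⟨a, b, h⟩ => ⟨a, b, h.symm⟩⟩

theorem wordLength_evalWord_eq_of_isInfix (hgen : ∀ g : G, ∃ w : List X, evalWord f w = g)
    {u w : List X} (hw : wordLength f (evalWord f w) = w.length) (hu : u <:+: w) :
    wordLength f (evalWord f u) = u.length := by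
  obtain ⟨a, b, rfl⟩ := hu
  have h₁ := wordLength_mul_le hgen (evalWord f a * evalWord f u) (evalWord f b)
  have h₂ := wordLength_mul_le hgen (evalWord f a) (evalWord f u)
  have := wordLength_evalWord_le (f := f) a
  have := wordLength_evalWord_le (f := f) b
  have := wordLength_evalWord_le (f := f) u
  simp only [evalWord_append, List.length_append] at hw ⊢
  omega

end Words

section Cayley

variable {G : Type*} [Group G] {X : Type*} {f : X → G}

theorem exists_cayley_walk_length_le (w : List X) (g : G) :
    ∃ p : (cayley f).Walk g (g * evalWord f w), p.length ≤ w.length := by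
  induction w generalizing g with
  | nil => exact ⟨Walk.nil.copy rfl (by simp), by rw [Walk.length_copy]; rfl⟩
  | cons x t ih =>
    obtain ⟨p, hp⟩ := ih (g * f x)
    have hend : g * f x * evalWord f t = g * evalWord f (x :: t) := by simp [mul_assoc]
    by_cases hx : g * f x = g
    · exact ⟨p.copy hx hend, by simp; omega⟩
    · have hadj : (cayley f).Adj g (g * f x) := ⟨Ne.symm hx, x, .inl rfl⟩
      exact ⟨(Walk.cons hadj p).copy rfl hend, by simp; omega⟩

theorem exists_word_of_cayley_walk {inv : X → X} (hinv : ∀ x : X, f (inv x) = (f x)⁻¹)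
    {g h : G} (p : (cayley f).Walk g h) :
    ∃ w : List X, w.length = p.length ∧ g * evalWord f w = h := by
  induction p with
  | nil => exact ⟨[], rfl, by simp⟩
  | @cons a b c hadj p ih =>
    obtain ⟨w, hw, hab⟩ := ih
    obtain ⟨x, hx | hx⟩ := hadj.2
    · exact ⟨x :: w, by simp [hw], by rw [evalWord_cons, ← mul_assoc, hx, hab]⟩
    · exact ⟨inv x :: w, by simp [hw], by
        rw [evalWord_cons, ← mul_assoc, hinv, ← hx, mul_inv_cancel_right, hab]⟩

theorem cayley_connected (hgen : ∀ g : G, ∃ w : List X, evalWord f w = g) :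
    (cayley f).Connected := by
  have : Nonempty G := ⟨1⟩
  refine ⟨fun g h => ?_⟩
  obtain ⟨w, hw⟩ := hgen (g⁻¹ * h)
  obtain ⟨p, -⟩ := exists_cayley_walk_length_le (f := f) w g
  exact ⟨p.copy rfl (by rw [hw, mul_inv_cancel_left])⟩

theorem dist_cayley (hgen : ∀ g : G, ∃ w : List X, evalWord f w = g) {inv : X → X}
    (hinv : ∀ x : X, f (inv x) = (f x)⁻¹) (g h : G) :
    (cayley f).dist g h = wordLength f (g⁻¹ * h) := by
  apply le_antisymm
  · obtain ⟨w, hw, hgh⟩ := exists_length_eq_wordLength hgen (g⁻¹ * h)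
    obtain ⟨p, hp⟩ := exists_cayley_walk_length_le (f := f) w g
    have := (dist_le p).trans hp
    rwa [hgh, mul_inv_cancel_left, hw] at this
  · obtain ⟨p, hp⟩ := (cayley_connected hgen).exists_walk_length_eq_dist g h
    obtain ⟨w, hw, rfl⟩ := exists_word_of_cayley_walk hinv p
    simpa [← hp, ← hw] using wordLength_evalWord_le (f := f) w

theorem wordLength_inv (hgen : ∀ g : G, ∃ w : List X, evalWord f w = g) {inv : X → X}
    (hinv : ∀ x : X, f (inv x) = (f x)⁻¹) (g : G) : wordLength f g⁻¹ = wordLength f g := by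
  simpa [dist_cayley hgen hinv] using (cayley f).dist_comm (u := g) (v := 1)

end Cayley

section Powers

variable {G : Type*} [Group G] {X : Type*} {f : X → G}

theorem isLocalGeodesic_evalWord_take (hgen : ∀ g : G, ∃ w : List X, evalWord f w = g)
    {inv : X → X} (hinv : ∀ x : X, f (inv x) = (f x)⁻¹) {L : ℕ} {u : List X}
    (hloc : ∀ w, w <:+: u → w.length ≤ L → wordLength f (evalWord f w) = w.length) :
    (cayley f).IsLocalGeodesic L u.length (fun i => evalWord f (u.take i)) := by
  intro i j hij hju hL
  have hsplit : evalWord f (u.take j) = evalWord f (u.take i) * evalWord f ((u.take j).drop i) := by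
    conv_lhs => rw [← List.take_append_drop i (u.take j)]
    rw [evalWord_append, List.take_take, min_eq_left hij]
  have hlen : ((u.take j).drop i).length = j - i := by simp; omega
  dsimp only
  rw [dist_cayley hgen hinv, hsplit, inv_mul_cancel_left, ← hlen]
  exact hloc _ ((List.drop_suffix i _).isInfix.trans (List.take_prefix j u).isInfix) (by omega)

theorem exists_drop_wordNPow (W : List X) (n k : ℕ) :
    ∃ j n', (wordNPow W n).drop k = W.drop j ++ wordNPow W n' := by
  induction n generalizing k with
  | zero => exact ⟨W.length, 0, by simp [wordNPow]⟩
  | succ n ih =>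
    show ∃ j n', (W ++ wordNPow W n).drop k = _
    by_cases hk : k ≤ W.length
    · exact ⟨k, n, by rw [List.drop_append, Nat.sub_eq_zero_of_le hk, List.drop_zero]⟩
    · obtain ⟨j, n', h⟩ := ih (k - W.length)
      exact ⟨j, n', by rw [List.drop_append, List.drop_eq_nil_of_le (by omega), List.nil_append, h]⟩

theorem exists_isInfix_drop_append_take {u W : List X} {n : ℕ} (hu : u <:+: wordNPow W n)
    (hlen : u.length ≤ W.length) : ∃ j, u <:+: W.drop j ++ W.take j := by
  obtain ⟨t, hut, hts⟩ := List.infix_iff_prefix_suffix.mp hu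
  obtain ⟨j, n', ht⟩ := exists_drop_wordNPow W n (_ - t.length)
  rw [← List.suffix_iff_eq_drop.mp hts] at ht
  subst ht
  refine ⟨j, List.IsPrefix.isInfix ?_⟩
  cases n' with
  | zero => simpa [wordNPow] using List.prefix_append_of_prefix hut
  | succ n' =>
    refine List.prefix_of_prefix_length_le hut ?_ (by simp; omega)
    exact (List.prefix_append_right_inj _).mpr
      ((List.take_prefix j W).trans (List.prefix_append _ _))

namespace CyclicallyMinimal

variable {W : List X} (hW : CyclicallyMinimal f W)
include hW

theorem wordLength_evalWord_drop_append_take (j : ℕ) :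
    wordLength f (evalWord f (W.drop j ++ W.take j)) = (W.drop j ++ W.take j).length := by
  refine le_antisymm (wordLength_evalWord_le _) ?_
  have hconj : (evalWord f (W.take j))⁻¹ * evalWord f W * (evalWord f (W.take j))⁻¹⁻¹ =
      evalWord f (W.drop j ++ W.take j) := by
    have hsplit : evalWord f W = evalWord f (W.take j) * evalWord f (W.drop j) := by
      rw [← evalWord_append, List.take_append_drop]
    rw [hsplit, evalWord_append]
    group
  have hlen : (W.drop j ++ W.take j).length = W.length := by simp; omega
  rw [hlen, ← hconj]
  exact hW _

theorem wordLength_evalWord_of_isInfix_wordNPow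
    (hgen : ∀ g : G, ∃ w : List X, evalWord f w = g) {u : List X} {n : ℕ}
    (hu : u <:+: wordNPow W n) (hlen : u.length ≤ W.length) :
    wordLength f (evalWord f u) = u.length := by
  obtain ⟨j, hj⟩ := exists_isInfix_drop_append_take hu hlen
  exact wordLength_evalWord_eq_of_isInfix hgen (hW.wordLength_evalWord_drop_append_take j) hj

theorem reverse_map (hgen : ∀ g : G, ∃ w : List X, evalWord f w = g) {inv : X → X}
    (hinv : ∀ x : X, f (inv x) = (f x)⁻¹) : CyclicallyMinimal f (W.reverse.map inv) := by
  intro h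
  have hconj : h * (evalWord f W)⁻¹ * h⁻¹ = (h * evalWord f W * h⁻¹)⁻¹ := by group
  rw [evalWord_reverse_map hinv, hconj, wordLength_inv hgen hinv, List.length_map,
    List.length_reverse]
  exact hW h

theorem isQGWord_wordNPow (hgen : ∀ g : G, ∃ w : List X, evalWord f w = g) {inv : X → X}
    (hinv : ∀ x : X, f (inv x) = (f x)⁻¹) {δ : ℕ} (hδ : 0 < δ)
    (hslim : SlimTriangles (cayley f) δ) (hlen : 180 * δ ≤ W.length) (n : ℕ) :
    IsQGWord f 4 (2520 * δ) (wordNPow W n) := by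
  intro u hu
  have hP := isLocalGeodesic_evalWord_take hgen hinv (L := 180 * δ) (u := u)
    fun w hw hwL => hW.wordLength_evalWord_of_isInfix_wordNPow hgen
      (hw.trans (isSubword_iff_isInfix.mp hu)) (hwL.trans hlen)
  have hbound := hP.le_two_mul_dist_add (cayley_connected hgen) hslim hδ
  simp only [List.take_zero, List.take_length, evalWord_nil, dist_cayley hgen hinv, inv_one,
    one_mul] at hbound
  have : (u.length : ℝ) ≤ 2 * wordLength f (evalWord f u) + 80 * δ := by exact_mod_cast hbound
  have : (0 : ℝ) ≤ wordLength f (evalWord f u) := Nat.cast_nonneg _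
  have : (0 : ℝ) ≤ δ := Nat.cast_nonneg _
  linarith

end CyclicallyMinimal

end Powers

theorem stmt3_general {G : Type*} [Group G] {X : Type*} (f : X → G)
    (hgen : ∀ g : G, ∃ w : List X, evalWord f w = g)
    (inv : X → X) (hinv : ∀ x : X, f (inv x) = (f x)⁻¹)
    (δ : ℕ) (hδ : 0 < δ) (hhyp : SlimTriangles (cayley f) δ)
    (V : List X) (hVmin : CyclicallyMinimal f V) (hVlen : 180 * δ ≤ V.length) :
    ∀ k : ℤ, IsQGWord f 4 (2520 * (δ : ℝ)) (wordZPow inv V k) := by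
  intro k
  cases k with
  | ofNat n => exact hVmin.isQGWord_wordNPow hgen hinv hδ hhyp hVlen n
  | negSucc n =>
    exact (hVmin.reverse_map hgen hinv).isQGWord_wordNPow hgen hinv hδ hhyp (by simpa using hVlen)
      (n + 1)

theorem stmt3 {G : Type*} [Group G] {X : Type*} [Fintype X] (f : X → G)
    (hgen : ∀ g : G, ∃ w : List X, evalWord f w = g)
    (inv : X → X) (hinv : ∀ x : X, f (inv x) = (f x)⁻¹)
    (δ : ℕ) (hδ : 0 < δ) (hhyp : SlimTriangles (cayley f) δ)
    (V : List X) (hVmin : CyclicallyMinimal f V) (hVlen : 180 * δ ≤ V.length) :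
    ∀ k : ℤ, IsQGWord f 4 (2520 * (δ : ℝ)) (wordZPow inv V k) :=
  stmt3_general f hgen inv hinv δ hδ hhyp V hVmin hVlen
end

section
/- Let H = ⟨G, t | t⁻¹ a t = b⟩ be an HNN-extension of a group G, where a, b ∈ G are elements of infinite order that are not proper powers in G. If g₀ ∈ G is not a proper power in G, then the image of g₀ in H is not a proper power in H. -/
/-- `g` is a proper power: `g = h ^ k` for some `h` and some `k ≥ 2`. -/
def IsProperPower {G : Type*} [Group G] (g : G) : Prop :=
  ∃ (h : G) (k : ℕ), 2 ≤ k ∧ g = h ^ k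

/-!
Suppose `g₀ = h ^ k` with `k ≥ 2`. Cyclic reduction conjugates `h` either into `G` or to the product
of a nonempty cyclically reduced word `L`. The second case is impossible: the powers of `L` are
reduced words, so their `t`-length grows linearly, while `h ^ (k n)` is conjugate to `g₀ ^ n ∈ G`
and so has bounded `t`-length. In the first case `g₀` is conjugate to `y ^ k` for some `y ∈ G`.
Peeling off the conjugator letter by letter, uniqueness of the `t`-pattern of reduced words shows
that each step conjugates an element of `⟨a⟩` or `⟨b⟩` by `φ` or `φ⁻¹`, which sends `a ^ j` to
`b ^ j` and back; as `a` and `b` are not proper powers, `a ^ j` is a proper power iff `|j| ≠ 1`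
iff `b ^ j` is one.
-/

section ProperPower

variable {G : Type*} [Group G]

theorem IsProperPower.conj {q : G} (g : G) (h : IsProperPower q) :
    IsProperPower (g * q * g⁻¹) := by
  obtain ⟨r, k, hk, rfl⟩ := h
  exact ⟨g * r * g⁻¹, k, hk, conj_pow.symm⟩

theorem IsProperPower.inv {q : G} (h : IsProperPower q) : IsProperPower q⁻¹ := by
  obtain ⟨r, k, hk, rfl⟩ := h
  exact ⟨r⁻¹, k, hk, (inv_pow r k).symm⟩

theorem isProperPower_zpow (y : G) {j : ℤ} (hj : j.natAbs ≠ 1) : IsProperPower (y ^ j) := by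
  rcases Nat.lt_or_ge j.natAbs 2 with h | h
  · obtain rfl : j = 0 := by omega
    exact ⟨1, 2, le_rfl, by simp⟩
  · refine ⟨y ^ j.sign, j.natAbs, h, ?_⟩
    rw [← zpow_natCast, ← zpow_mul, Int.sign_mul_natAbs]

theorem natAbs_ne_one_of_isProperPower_zpow {x : G} (hx : ¬ IsProperPower x) {j : ℤ}
    (h : IsProperPower (x ^ j)) : j.natAbs ≠ 1 := by
  intro hj
  rcases Int.natAbs_eq_iff.1 hj with rfl | rfl
  · exact hx (by simpa using h)
  · exact hx (by simpa using h.inv)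

end ProperPower

namespace HNNExtension

open NormalWord

variable {G : Type*} [Group G] {A B : Subgroup G} (φ : A ≃* B)

/-- The relation in the `chain` field of `ReducedWord`. -/
def NoPinch (A B : Subgroup G) (a b : ℤˣ × G) : Prop :=
  a.2 ∈ toSubgroup A B a.1 → a.1 = b.1

def lettersProd (L : List (ℤˣ × G)) : HNNExtension G A B φ :=
  (L.map fun a => t ^ (a.1 : ℤ) * of a.2).prod

@[simp] theorem lettersProd_nil : lettersProd φ ([] : List (ℤˣ × G)) = 1 := rfl

@[simp] theorem lettersProd_cons (a : ℤˣ × G) (L : List (ℤˣ × G)) :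
    lettersProd φ (a :: L) = t ^ (a.1 : ℤ) * of a.2 * lettersProd φ L := by
  simp [lettersProd]

@[simp] theorem lettersProd_append (L₁ L₂ : List (ℤˣ × G)) :
    lettersProd φ (L₁ ++ L₂) = lettersProd φ L₁ * lettersProd φ L₂ := by
  simp [lettersProd]

theorem NormalWord.ReducedWord.prod_eq (w : ReducedWord G A B) :
    w.prod φ = of w.head * lettersProd φ w.toList := rfl

theorem toSubgroupEquiv_eq_conj (u : ℤˣ) (a : toSubgroup A B u) :
    (of (toSubgroupEquiv φ u a : G) : HNNExtension G A B φ)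
      = t ^ (u : ℤ) * of (a : G) * (t ^ (u : ℤ))⁻¹ := by
  rcases Int.units_eq_one_or u with rfl | rfl
  · rw [Units.val_one, zpow_one]
    exact equiv_eq_conj a
  · rw [Units.val_neg, Units.val_one, zpow_neg_one, inv_inv]
    exact equiv_symm_eq_conj a

theorem exists_reducedWord_prod_eq (x : HNNExtension G A B φ) :
    ∃ w : ReducedWord G A B, w.prod φ = x := by
  obtain ⟨d⟩ := TransversalPair.nonempty G A B
  exact ⟨((NormalWord.equiv φ d) x).toReducedWord, (NormalWord.equiv φ d).symm_apply_apply x⟩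

theorem isChain_noPinch_replace_last {L : List (ℤˣ × G)} {v : ℤˣ} {m m' : G}
    (h : (L ++ [(v, m)]).IsChain (NoPinch A B)) : (L ++ [(v, m')]).IsChain (NoPinch A B) := by
  rw [List.isChain_append] at h ⊢
  exact ⟨h.1, List.isChain_singleton _, fun x hx y hy => by
    obtain rfl : y = (v, m') := by simpa using hy.symm
    exact h.2.2 x hx (v, m) rfl⟩

noncomputable def tLength (x : HNNExtension G A B φ) : ℕ :=
  (exists_reducedWord_prod_eq φ x).choose.toList.length

theorem NormalWord.ReducedWord.tLength_prod (w : ReducedWord G A B) :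
    tLength φ (w.prod φ) = w.toList.length := by
  have h := (exists_reducedWord_prod_eq φ (w.prod φ)).choose_spec
  unfold tLength
  simpa using congrArg List.length (ReducedWord.map_fst_eq_and_of_prod_eq φ h).1

theorem tLength_of_mul (g : G) (x : HNNExtension G A B φ) :
    tLength φ (of g * x) = tLength φ x := by
  obtain ⟨w, rfl⟩ := exists_reducedWord_prod_eq φ x
  have : of g * w.prod φ = (⟨g * w.head, w.toList, w.chain⟩ : ReducedWord G A B).prod φ := by
    simp [ReducedWord.prod_eq, mul_assoc]
  rw [this, ReducedWord.tLength_prod, ReducedWord.tLength_prod]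

theorem tLength_tpow_mul_le (u : ℤˣ) (x : HNNExtension G A B φ) :
    tLength φ (t ^ (u : ℤ) * x) ≤ tLength φ x + 1 := by
  obtain ⟨⟨h, L, hL⟩, rfl⟩ := exists_reducedWord_prod_eq φ x
  simp only [ReducedWord.tLength_prod]
  by_cases hpinch : h ∈ toSubgroup A B u ∧ ∃ k L', L = (-u, k) :: L'
  · obtain ⟨hh, k, L', rfl⟩ := hpinch
    have : t ^ (u : ℤ) * (⟨h, (-u, k) :: L', hL⟩ : ReducedWord G A B).prod φ
        = (⟨toSubgroupEquiv φ u ⟨h, hh⟩ * k, L', hL.tail⟩ : ReducedWord G A B).prod φ := by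
      simp [ReducedWord.prod_eq, toSubgroupEquiv_eq_conj, mul_assoc]
    rw [this, ReducedWord.tLength_prod]
    simp only [List.length_cons]
    omega
  · have hc : ((u, h) :: L).IsChain (NoPinch A B) := by
      refine List.isChain_cons.2 ⟨fun b hb hh => ?_, hL⟩
      obtain ⟨L', rfl⟩ : ∃ L', L = b :: L' := by
        cases L <;> simp_all
      by_contra hne
      have hu : u = -b.1 := Int.units_ne_iff_eq_neg.1 hne
      exact hpinch ⟨hh, b.2, L', by rw [hu, neg_neg]⟩
    have : t ^ (u : ℤ) * (⟨h, L, hL⟩ : ReducedWord G A B).prod φ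
        = (⟨1, (u, h) :: L, hc⟩ : ReducedWord G A B).prod φ := by
      simp [ReducedWord.prod_eq, mul_assoc]
    rw [this, ReducedWord.tLength_prod]
    simp

theorem tLength_lettersProd_mul_le (L : List (ℤˣ × G)) (x : HNNExtension G A B φ) :
    tLength φ (lettersProd φ L * x) ≤ L.length + tLength φ x := by
  induction L with
  | nil => simp
  | cons a L ih =>
    calc tLength φ (lettersProd φ (a :: L) * x)
        = tLength φ (t ^ (a.1 : ℤ) * (of a.2 * (lettersProd φ L * x))) := by
          simp [mul_assoc]
      _ ≤ tLength φ (lettersProd φ L * x) + 1 :=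
          (tLength_tpow_mul_le φ _ _).trans_eq (by rw [tLength_of_mul])
      _ ≤ (a :: L).length + tLength φ x := by rw [List.length_cons]; omega

theorem tLength_mul_le (x y : HNNExtension G A B φ) :
    tLength φ (x * y) ≤ tLength φ x + tLength φ y := by
  obtain ⟨w, rfl⟩ := exists_reducedWord_prod_eq φ x
  rw [ReducedWord.prod_eq, mul_assoc, tLength_of_mul, ← ReducedWord.prod_eq,
    ReducedWord.tLength_prod]
  exact tLength_lettersProd_mul_le φ _ _

def CyclicallyReduced (A B : Subgroup G) (L : List (ℤˣ × G)) : Prop :=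
  L.IsChain (NoPinch A B) ∧ ∀ a ∈ L.getLast?, ∀ b ∈ L.head?, NoPinch A B a b

theorem CyclicallyReduced.isChain_flatten_replicate {L : List (ℤˣ × G)}
    (hL : CyclicallyReduced A B L) (n : ℕ) :
    (List.replicate n L).flatten.IsChain (NoPinch A B) := by
  induction n with
  | zero => simp
  | succ n ih =>
    rw [List.replicate_succ, List.flatten_cons]
    refine hL.1.append ih fun a ha b hb => hL.2 a ha b ?_
    rcases n with _ | n
    · simp at hb
    · rwa [List.head?_flatten_replicate n.succ_ne_zero] at hb

theorem lettersProd_flatten_replicate (L : List (ℤˣ × G)) (n : ℕ) :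
    lettersProd φ (List.replicate n L).flatten = lettersProd φ L ^ n := by
  induction n with
  | zero => simp
  | succ n ih => rw [List.replicate_succ, List.flatten_cons, lettersProd_append, ih, pow_succ']

theorem CyclicallyReduced.tLength_lettersProd_pow {L : List (ℤˣ × G)}
    (hL : CyclicallyReduced A B L) (n : ℕ) :
    tLength φ (lettersProd φ L ^ n) = n * L.length := by
  have := (⟨1, _, hL.isChain_flatten_replicate n⟩ : ReducedWord G A B).tLength_prod φ
  simpa [ReducedWord.prod_eq, lettersProd_flatten_replicate] using this

theorem CyclicallyReduced.conj_pow_notMem_range {L : List (ℤˣ × G)}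
    (hL : CyclicallyReduced A B L) (hne : L ≠ []) {k : ℕ} (hk : k ≠ 0)
    (c : HNNExtension G A B φ) : c * lettersProd φ L ^ k * c⁻¹ ∉ (of).range := by
  rintro ⟨x, hx⟩
  set N := tLength φ c⁻¹ + tLength φ c
  have hpow : lettersProd φ L ^ (k * (N + 1)) = c⁻¹ * of (x ^ (N + 1)) * c := by
    rw [map_pow, hx, conj_pow, pow_mul]
    group
  have hle : tLength φ (c⁻¹ * of (x ^ (N + 1)) * c) ≤ N := by
    rw [mul_assoc]
    exact (tLength_mul_le φ _ _).trans (by rw [tLength_of_mul])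
  rw [← hpow, hL.tLength_lettersProd_pow] at hle
  have := Nat.mul_le_mul (Nat.mul_le_mul (Nat.one_le_iff_ne_zero.2 hk) (le_refl (N + 1)))
    (List.length_pos_iff.2 hne)
  omega

def IsConjCyclicallyReduced (x : HNNExtension G A B φ) : Prop :=
  ∃ c : HNNExtension G A B φ, (∃ y : G, x = c * of y * c⁻¹) ∨
    ∃ L, L ≠ [] ∧ CyclicallyReduced A B L ∧ x = c * lettersProd φ L * c⁻¹

theorem IsConjCyclicallyReduced.conj {x : HNNExtension G A B φ}
    (hx : IsConjCyclicallyReduced φ x) (d : HNNExtension G A B φ) :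
    IsConjCyclicallyReduced φ (d * x * d⁻¹) := by
  obtain ⟨c, ⟨y, rfl⟩ | ⟨L, hne, hL, rfl⟩⟩ := hx
  · exact ⟨d * c, Or.inl ⟨y, by group⟩⟩
  · exact ⟨d * c, Or.inr ⟨L, hne, hL, by group⟩⟩

theorem isConjCyclicallyReduced_lettersProd_mul_of {L : List (ℤˣ × G)}
    (hL : L.IsChain (NoPinch A B)) (g : G) :
    IsConjCyclicallyReduced φ (lettersProd φ L * of g) := by
  induction hn : L.length using Nat.strong_induction_on generalizing L g with
  | _ n ih =>
  rcases L.eq_nil_or_concat' with rfl | ⟨L₂, ⟨v, m⟩, rfl⟩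
  · exact ⟨1, Or.inl ⟨g, by simp⟩⟩
  have hL' : (L₂ ++ [(v, m * g)]).IsChain (NoPinch A B) := isChain_noPinch_replace_last hL
  have hprod : lettersProd φ (L₂ ++ [(v, m)]) * of g = lettersProd φ (L₂ ++ [(v, m * g)]) := by
    simp [mul_assoc]
  rw [hprod]
  by_cases hcyc : CyclicallyReduced A B (L₂ ++ [(v, m * g)])
  · exact ⟨1, Or.inr ⟨_, by simp, hcyc, by simp⟩⟩
  obtain ⟨u, k, L₃, rfl, hmem, rfl⟩ :
      ∃ u k L₃, L₂ = (u, k) :: L₃ ∧ m * g ∈ toSubgroup A B v ∧ v = -u := by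
    simp only [CyclicallyReduced, hL', true_and, not_forall, List.getLast?_concat,
      Option.mem_some_iff, forall_eq', NoPinch] at hcyc
    obtain ⟨⟨u, k⟩, hhead, hmem, hne⟩ := hcyc
    cases L₂ with
    | nil => simp_all
    | cons a L₃ =>
      obtain rfl : a = (u, k) := by simpa using hhead
      exact ⟨u, k, L₃, rfl, hmem, Int.units_ne_iff_eq_neg.1 hne⟩
  -- the last letter pinches against the first, so conjugating by `t ^ u * k` removes both
  obtain ⟨ψ, hψ⟩ : ∃ ψ : G,
      (of ψ : HNNExtension G A B φ) = (t ^ (u : ℤ))⁻¹ * of (m * g) * t ^ (u : ℤ) :=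
    ⟨_, by simpa [zpow_neg] using toSubgroupEquiv_eq_conj φ (-u) ⟨m * g, hmem⟩⟩
  have hconj : lettersProd φ ((u, k) :: L₃ ++ [(-u, m * g)])
      = (t ^ (u : ℤ) * of k) * (lettersProd φ L₃ * of (ψ * k)) * (t ^ (u : ℤ) * of k)⁻¹ := by
    simp only [map_mul, hψ, Units.val_neg, zpow_neg, lettersProd_append, lettersProd_cons,
      List.cons_append, lettersProd_nil]
    group
  rw [hconj]
  refine (ih L₃.length ?_ (hL.infix ⟨[(u, k)], [(-u, m)], rfl⟩) (ψ * k) rfl).conj φ _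
  simp [← hn]

theorem isConjCyclicallyReduced (x : HNNExtension G A B φ) : IsConjCyclicallyReduced φ x := by
  obtain ⟨w, rfl⟩ := exists_reducedWord_prod_eq φ x
  simpa [ReducedWord.prod_eq, mul_assoc] using
    (isConjCyclicallyReduced_lettersProd_mul_of φ w.chain w.head).conj φ (of w.head)

theorem NormalWord.ReducedWord.exists_prod_eq_mul_of (w : ReducedWord G A B) (hw : w.toList ≠ [])
    (g : G) : ∃ w' : ReducedWord G A B, w'.prod φ = w.prod φ * of g ∧ w'.head = w.head := by
  obtain ⟨h, L, hL⟩ := w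
  obtain ⟨L', ⟨v, m⟩, rfl⟩ := (List.eq_nil_or_concat' L).resolve_left hw
  exact ⟨⟨h, L' ++ [(v, m * g)], isChain_noPinch_replace_last hL⟩,
    by simp [ReducedWord.prod_eq, mul_assoc], rfl⟩

theorem NormalWord.ReducedWord.conj_mem_toSubgroup {w : ReducedWord G A B} {u : ℤˣ}
    (hu : w.toList.head?.map Prod.fst = some u) {q x : G}
    (h : of x * w.prod φ = w.prod φ * of q) : w.head⁻¹ * x * w.head ∈ toSubgroup A B (-u) := by
  obtain ⟨w', hw', hhead⟩ := w.exists_prod_eq_mul_of φ (by rintro h; simp [h] at hu) q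
  let wx : ReducedWord G A B := ⟨x * w.head, w.toList, w.chain⟩
  have hprod : wx.prod φ = w'.prod φ := by
    rw [hw', ← h, ReducedWord.prod_eq, ReducedWord.prod_eq, map_mul, mul_assoc]
  have := (ReducedWord.map_fst_eq_and_of_prod_eq φ hprod).2 u hu
  simpa [wx, hhead, mul_assoc] using inv_mem this

theorem mem_of_conj_eq_of {S : Set G} (hconj : ∀ g, ∀ q ∈ S, g * q * g⁻¹ ∈ S)
    (hrefl : ∀ u (a : toSubgroup A B u), (toSubgroupEquiv φ u a : G) ∈ S → (a : G) ∈ S)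
    {c : HNNExtension G A B φ} {q x : G} (h : c * of q * c⁻¹ = of x) (hq : q ∈ S) : x ∈ S := by
  obtain ⟨⟨g, L, hL⟩, rfl⟩ := exists_reducedWord_prod_eq φ c
  induction L generalizing g x with
  | nil =>
    obtain rfl : g * q * g⁻¹ = x := of_injective (φ := φ) (by simpa [ReducedWord.prod_eq] using h)
    exact hconj g q hq
  | cons a L ih =>
    obtain ⟨u, k⟩ := a
    have hx' : g⁻¹ * x * g ∈ toSubgroup A B (-u) :=
      ReducedWord.conj_mem_toSubgroup φ (w := ⟨g, (u, k) :: L, hL⟩) rfl (q := q)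
        (by rw [← h]; group)
    have hshorter : of k * lettersProd φ L * of q * (of k * lettersProd φ L)⁻¹
        = of (toSubgroupEquiv φ (-u) ⟨_, hx'⟩ : G) := by
      rw [toSubgroupEquiv_eq_conj]
      simp only [map_mul, map_inv, ← h, ReducedWord.prod_eq, lettersProd_cons, Units.val_neg,
        zpow_neg]
      group
    simpa [mul_assoc] using hconj g _ (hrefl (-u) ⟨_, hx'⟩ (ih k hL.tail hshorter))

end HNNExtension

open HNNExtension

theorem Subgroup.exists_zpow_eq_and_apply_eq_zpow {G : Type*} [Group G] {a b : G}
    (φ : zpowers a ≃* zpowers b) (hφ : (φ ⟨a, mem_zpowers a⟩ : G) = b) (q : zpowers a) :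
    ∃ j : ℤ, (q : G) = a ^ j ∧ (φ q : G) = b ^ j := by
  obtain ⟨j, hj⟩ := mem_zpowers_iff.1 q.2
  have : q = ⟨a, mem_zpowers a⟩ ^ j := Subtype.ext (by simp [hj])
  exact ⟨j, hj.symm, by rw [this, map_zpow, SubgroupClass.coe_zpow, hφ]⟩

theorem isProperPower_of_isProperPower_toSubgroupEquiv {G : Type*} [Group G] {a b : G}
    (hap : ¬ IsProperPower a) (hbp : ¬ IsProperPower b)
    (φ : (Subgroup.zpowers a) ≃* (Subgroup.zpowers b))
    (hφ : ((φ ⟨a, Subgroup.mem_zpowers a⟩ : Subgroup.zpowers b) : G) = b)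
    (u : ℤˣ) (q : toSubgroup (Subgroup.zpowers a) (Subgroup.zpowers b) u)
    (hq : IsProperPower (toSubgroupEquiv φ u q : G)) : IsProperPower (q : G) := by
  rcases Int.units_eq_one_or u with rfl | rfl
  · revert q
    change ∀ q : Subgroup.zpowers a, IsProperPower (φ q : G) → IsProperPower (q : G)
    intro q hq
    obtain ⟨j, hqj, hφj⟩ := Subgroup.exists_zpow_eq_and_apply_eq_zpow φ hφ q
    rw [hφj] at hq
    rw [hqj]
    exact isProperPower_zpow a (natAbs_ne_one_of_isProperPower_zpow hbp hq)
  · revert q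
    change ∀ q : Subgroup.zpowers b, IsProperPower (φ.symm q : G) → IsProperPower (q : G)
    intro q hq
    obtain ⟨j, hqj, hφj⟩ := Subgroup.exists_zpow_eq_and_apply_eq_zpow φ hφ (φ.symm q)
    rw [MulEquiv.apply_symm_apply] at hφj
    rw [hqj] at hq
    rw [hφj]
    exact isProperPower_zpow b (natAbs_ne_one_of_isProperPower_zpow hap hq)

theorem stmt8_general {G : Type*} [Group G] (a b : G)
    (hap : ¬ IsProperPower a) (hbp : ¬ IsProperPower b)
    (φ : (Subgroup.zpowers a) ≃* (Subgroup.zpowers b))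
    (hφ : ((φ ⟨a, Subgroup.mem_zpowers a⟩ : Subgroup.zpowers b) : G) = b)
    (g₀ : G) (hg₀ : ¬ IsProperPower g₀) :
    ¬ IsProperPower
      (HNNExtension.of g₀ : HNNExtension G (Subgroup.zpowers a) (Subgroup.zpowers b) φ) := by
  rintro ⟨h, k, hk, hg₀h⟩
  obtain ⟨c, ⟨y, rfl⟩ | ⟨L, hne, hL, rfl⟩⟩ := isConjCyclicallyReduced φ h
  · have hconj : c * of (y ^ k) * c⁻¹ = of g₀ := by rw [hg₀h, conj_pow, map_pow]
    exact hg₀ (mem_of_conj_eq_of φ (S := {g | IsProperPower g}) (fun g _ hq => hq.conj g)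
      (isProperPower_of_isProperPower_toSubgroupEquiv hap hbp φ hφ) hconj ⟨y, k, hk, rfl⟩)
  · exact hL.conj_pow_notMem_range φ hne (k := k) (by omega) c ⟨g₀, by rw [hg₀h, conj_pow]⟩

theorem stmt8 {G : Type*} [Group G] (a b : G)
    (ha : ¬ IsOfFinOrder a) (hb : ¬ IsOfFinOrder b)
    (hap : ¬ IsProperPower a) (hbp : ¬ IsProperPower b)
    (φ : (Subgroup.zpowers a) ≃* (Subgroup.zpowers b))
    (hφ : ((φ ⟨a, Subgroup.mem_zpowers a⟩ : Subgroup.zpowers b) : G) = b)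
    (g₀ : G) (hg₀ : ¬ IsProperPower g₀) :
    ¬ IsProperPower
      (HNNExtension.of g₀ : HNNExtension G (Subgroup.zpowers a) (Subgroup.zpowers b) φ) :=
  stmt8_general a b hap hbp φ hφ g₀ hg₀
end

section
/- Let X be a δ-hyperbolic geodesic metric space and let p be a k-local geodesic with k > 8δ. Then: (1) p lies in the 2δ-neighborhood of any geodesic segment q joining p₋ to p₊; (2) q lies in the 3δ-neighborhood of p; (3) p is a (λ, c)-quasi-geodesic with λ = (k+4δ)/(k−4δ) and c = 2δ. -/
/-!
Let `D` be the largest distance from a point `z = p s₀` of `p` to `q`, and let `x`, `y` be the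
points of `p` at distance `k / 2` before and after `z` (or the endpoints of `p`, which lie on `q`).
The subpath from `x` to `y` is geodesic, so two slim triangles, built on `x`, `y` and their nearest
points on `q`, put `z` within `2δ` of `q` or of a side issuing from `x` or `y`; in the latter case
the maximality of `D` forces `k / 2 ≤ 4δ`, which is excluded. This gives (1).

For (2), continuity yields a point `p s` that is `2δ`-close to both `q [0, t]` and `q [t, L]`; the
slim triangle on the two nearest points and `p s` puts `q t` within `3δ` of `p s`.

For (3), induct on the length of `p` in steps of `k`: by (1) the point `k` before the end of `p` is
`2δ`-close to `q`, so removing the last `k` of length loses at least `k - 4δ` of endpoint distance.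
-/

/-- `p` restricted to `[a, b]` is a geodesic parametrized by arclength. -/
def IsGeodParam {X : Type*} [MetricSpace X] (p : ℝ → X) (a b : ℝ) : Prop :=
  ∀ s ∈ Set.Icc a b, ∀ t ∈ Set.Icc a b, dist (p s) (p t) = |s - t|

/-- `X` is a geodesic metric space. -/
def GeodesicSpace (X : Type*) [MetricSpace X] : Prop :=
  ∀ x y : X, ∃ p : ℝ → X, IsGeodParam p 0 (dist x y) ∧ p 0 = x ∧ p (dist x y) = y

/-- `p` restricted to `[a, b]`, parametrized by arclength, is a `(lam, c)`-quasi-geodesic. -/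
def IsQGParam {X : Type*} [MetricSpace X] (lam c : ℝ) (p : ℝ → X) (a b : ℝ) : Prop :=
  (∀ s ∈ Set.Icc a b, ∀ t ∈ Set.Icc a b, dist (p s) (p t) ≤ |s - t|) ∧
  (∀ s ∈ Set.Icc a b, ∀ t ∈ Set.Icc a b, |s - t| ≤ lam * dist (p s) (p t) + c)

/-- All geodesic triangles of `X` are `δ`-slim: each side is contained in the
`δ`-neighborhood of the union of the other two sides. -/
def DeltaSlimSpace (X : Type*) [MetricSpace X] (δ : ℝ) : Prop :=
  ∀ (x y z : X) (p q r : ℝ → X),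
    IsGeodParam p 0 (dist x y) → p 0 = x → p (dist x y) = y →
    IsGeodParam q 0 (dist y z) → q 0 = y → q (dist y z) = z →
    IsGeodParam r 0 (dist x z) → r 0 = x → r (dist x z) = z →
    ∀ s ∈ Set.Icc (0 : ℝ) (dist x y),
      Metric.infDist (p s) (q '' Set.Icc 0 (dist y z) ∪ r '' Set.Icc 0 (dist x z)) ≤ δ

/-- `p` restricted to `[a, b]` is a `k`-local geodesic: every subpath of length at most
`k` is a geodesic. -/
def IsLocalGeodesic {X : Type*} [MetricSpace X] (k : ℝ) (p : ℝ → X) (a b : ℝ) : Prop :=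
  ∀ s ∈ Set.Icc a b, ∀ t ∈ Set.Icc a b, |s - t| ≤ k → dist (p s) (p t) = |s - t|

open Set Metric

section Segments

variable {X : Type*} [MetricSpace X]

def IsGeodSegment (S : Set X) (x y : X) : Prop :=
  ∃ g : ℝ → X, IsGeodParam g 0 (dist x y) ∧ g 0 = x ∧ g (dist x y) = y ∧
    g '' Icc 0 (dist x y) = S

theorem IsGeodParam.mono {p : ℝ → X} {a b c d : ℝ} (hp : IsGeodParam p a b)
    (h : Icc c d ⊆ Icc a b) : IsGeodParam p c d :=
  fun s hs t ht => hp s (h hs) t (h ht)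

theorem IsGeodParam.lipschitzOnWith {p : ℝ → X} {a b : ℝ} (hp : IsGeodParam p a b) :
    LipschitzOnWith 1 p (Icc a b) :=
  LipschitzOnWith.of_dist_le_mul fun s hs t ht => by simp [hp s hs t ht, Real.dist_eq]

theorem IsGeodParam.isGeodSegment_image {p : ℝ → X} {a b : ℝ} (hp : IsGeodParam p a b)
    (hab : a ≤ b) : IsGeodSegment (p '' Icc a b) (p a) (p b) := by
  have hd : dist (p a) (p b) = b - a := by
    rw [hp a ⟨le_rfl, hab⟩ b ⟨hab, le_rfl⟩, abs_sub_comm, abs_of_nonneg (sub_nonneg.2 hab)]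
  have mem : ∀ u ∈ Icc 0 (b - a), a + u ∈ Icc a b :=
    fun u hu => ⟨by linarith [hu.1], by linarith [hu.2]⟩
  refine ⟨fun u => p (a + u), ?_, by simp, by simp [hd], ?_⟩
  · rw [hd]
    intro u hu v hv
    rw [hp _ (mem u hu) _ (mem v hv), add_sub_add_left_eq_sub]
  · rw [hd, show (fun u => p (a + u)) = p ∘ (a + ·) from rfl, image_comp, image_const_add_Icc]
    simp

theorem IsGeodSegment.symm {S : Set X} {x y : X} (hS : IsGeodSegment S x y) :
    IsGeodSegment S y x := by
  obtain ⟨g, hg, hg0, hg1, rfl⟩ := hS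
  refine ⟨fun u => g (dist x y - u), ?_, by simpa [dist_comm] using hg1,
    by simpa [dist_comm] using hg0, ?_⟩
  · rw [dist_comm y x]
    intro u hu v hv
    rw [hg _ ⟨by linarith [hu.2], by linarith [hu.1]⟩ _ ⟨by linarith [hv.2], by linarith [hv.1]⟩,
      sub_sub_sub_cancel_left, abs_sub_comm]
  · rw [dist_comm y x, show (fun u => g (dist x y - u)) = g ∘ (dist x y - ·) from rfl,
      image_comp]
    simp

theorem IsGeodParam.isGeodSegment_image_uIcc {p : ℝ → X} {a b s t : ℝ} (hp : IsGeodParam p a b)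
    (hs : s ∈ Icc a b) (ht : t ∈ Icc a b) : IsGeodSegment (p '' uIcc s t) (p s) (p t) := by
  rcases le_total s t with hst | hts
  · rw [uIcc_of_le hst]
    exact (hp.mono (Icc_subset_Icc hs.1 ht.2)).isGeodSegment_image hst
  · rw [uIcc_of_ge hts]
    exact ((hp.mono (Icc_subset_Icc ht.1 hs.2)).isGeodSegment_image hts).symm

theorem IsGeodSegment.isCompact {S : Set X} {x y : X} (hS : IsGeodSegment S x y) :
    IsCompact S := by
  obtain ⟨g, hg, -, -, rfl⟩ := hS
  exact isCompact_Icc.image_of_continuousOn hg.lipschitzOnWith.continuousOn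

theorem IsGeodSegment.left_mem {S : Set X} {x y : X} (hS : IsGeodSegment S x y) : x ∈ S := by
  obtain ⟨g, -, hg0, -, rfl⟩ := hS
  exact ⟨0, left_mem_Icc.2 dist_nonneg, hg0⟩

theorem IsGeodSegment.dist_add_dist {S : Set X} {x y w : X} (hS : IsGeodSegment S x y)
    (hw : w ∈ S) : dist x w + dist w y = dist x y := by
  obtain ⟨g, hg, hg0, hg1, rfl⟩ := hS
  obtain ⟨u, hu, rfl⟩ := hw
  have h0 := hg 0 (left_mem_Icc.2 dist_nonneg) u hu
  have h1 := hg u hu _ (right_mem_Icc.2 dist_nonneg)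
  rw [hg0] at h0
  rw [hg1] at h1
  rw [h0, h1, abs_of_nonpos (by linarith [hu.1]), abs_of_nonpos (by linarith [hu.2])]
  ring

theorem IsGeodSegment.dist_le {S : Set X} {x y w : X} (hS : IsGeodSegment S x y)
    (hw : w ∈ S) : dist w y ≤ dist x y := by
  linarith [hS.dist_add_dist hw, dist_nonneg (x := x) (y := w)]

theorem IsGeodSegment.exists_subsegment {S : Set X} {x y a b : X} (hS : IsGeodSegment S x y)
    (ha : a ∈ S) (hb : b ∈ S) : ∃ T ⊆ S, IsGeodSegment T a b := by
  obtain ⟨g, hg, -, -, rfl⟩ := hS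
  obtain ⟨s, hs, rfl⟩ := ha
  obtain ⟨t, ht, rfl⟩ := hb
  exact ⟨_, image_mono (uIcc_subset_Icc hs ht), hg.isGeodSegment_image_uIcc hs ht⟩

theorem GeodesicSpace.exists_isGeodSegment (hgeo : GeodesicSpace X) (x y : X) :
    ∃ S : Set X, IsGeodSegment S x y := by
  obtain ⟨g, hg, hg0, hg1⟩ := hgeo x y
  exact ⟨_, g, hg, hg0, hg1, rfl⟩

theorem IsCompact.exists_dist_le_of_infDist_le {K : Set X} (hK : IsCompact K) (hne : K.Nonempty)
    {x : X} {r : ℝ} (h : infDist x K ≤ r) : ∃ a ∈ K, dist x a ≤ r := by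
  obtain ⟨a, ha, hxa⟩ := hK.exists_infDist_eq_dist hne x
  exact ⟨a, ha, hxa ▸ h⟩

theorem DeltaSlimSpace.exists_dist_le {δ : ℝ} (hhyp : DeltaSlimSpace X δ) {x y z w : X}
    {S T U : Set X} (hS : IsGeodSegment S x y) (hT : IsGeodSegment T y z)
    (hU : IsGeodSegment U x z) (hw : w ∈ S) : ∃ v ∈ T ∪ U, dist w v ≤ δ := by
  have hTU : IsCompact (T ∪ U) := hT.isCompact.union hU.isCompact
  have hne : (T ∪ U).Nonempty := ⟨y, Or.inl hT.left_mem⟩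
  obtain ⟨p, hp, hp0, hp1, rfl⟩ := hS
  obtain ⟨q, hq, hq0, hq1, rfl⟩ := hT
  obtain ⟨r, hr, hr0, hr1, rfl⟩ := hU
  obtain ⟨s, hs, rfl⟩ := hw
  exact hTU.exists_dist_le_of_infDist_le hne
    (hhyp x y z p q r hp hp0 hp1 hq hq0 hq1 hr hr0 hr1 s hs)

end Segments

theorem Real.forall_of_step {k : ℝ} (hk : 0 < k) {P : ℝ → Prop} (base : ∀ x ∈ Icc 0 k, P x)
    (step : ∀ x, k < x → P (x - k) → P x) {x : ℝ} (hx : 0 ≤ x) : P x := by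
  have bounded : ∀ n : ℕ, ∀ x, 0 ≤ x → x ≤ n * k → P x := by
    intro n
    induction n with
    | zero => exact fun x hx0 hxn => base x ⟨hx0, by simp at hxn; linarith⟩
    | succ n ih =>
      intro x hx0 hxn
      by_cases hxk : x ≤ k
      · exact base x ⟨hx0, hxk⟩
      · push_cast at hxn
        exact step x (not_le.1 hxk) (ih _ (by linarith) (by linarith))
  obtain ⟨n, hn⟩ := exists_nat_ge (x / k)
  exact bounded n x hx ((div_le_iff₀ hk).1 hn)

section LocalGeodesic

variable {X : Type*} [MetricSpace X] {k : ℝ} {p : ℝ → X}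

theorem IsLocalGeodesic.mono {a b c d : ℝ} (hp : IsLocalGeodesic k p a b)
    (h : Icc c d ⊆ Icc a b) : IsLocalGeodesic k p c d :=
  fun s hs t ht => hp s (h hs) t (h ht)

theorem IsLocalGeodesic.shift {a b s t : ℝ} (hp : IsLocalGeodesic k p a b) (hs : s ∈ Icc a b)
    (ht : t ∈ Icc a b) : IsLocalGeodesic k (fun u => p (s + u)) 0 (t - s) := by
  have mem : ∀ u ∈ Icc 0 (t - s), s + u ∈ Icc a b :=
    fun u hu => ⟨by linarith [hu.1, hs.1], by linarith [hu.2, ht.2]⟩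
  intro u hu v hv huv
  rw [← add_sub_add_left_eq_sub u v s] at huv ⊢
  exact hp _ (mem u hu) _ (mem v hv) huv

theorem IsLocalGeodesic.isGeodParam {a b c d : ℝ} (hp : IsLocalGeodesic k p a b)
    (h : Icc c d ⊆ Icc a b) (hcd : d - c ≤ k) : IsGeodParam p c d :=
  fun s hs t ht => hp s (h hs) t (h ht)
    (abs_sub_le_iff.2 ⟨by linarith [hs.2, ht.1], by linarith [hs.1, ht.2]⟩)

theorem IsLocalGeodesic.dist_eq {a b s t : ℝ} (hp : IsLocalGeodesic k p a b) (hs : s ∈ Icc a b)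
    (ht : t ∈ Icc a b) (hst : s ≤ t) (htk : t - s ≤ k) : dist (p s) (p t) = t - s := by
  rw [hp s hs t ht (by rwa [abs_sub_comm, abs_of_nonneg (sub_nonneg.2 hst)]), abs_sub_comm,
    abs_of_nonneg (sub_nonneg.2 hst)]

theorem IsLocalGeodesic.dist_le_of_zero (hk : 0 < k) {ℓ : ℝ} (hℓ : 0 ≤ ℓ)
    (hp : IsLocalGeodesic k p 0 ℓ) : dist (p 0) (p ℓ) ≤ ℓ := by
  refine Real.forall_of_step hk
    (P := fun ℓ => ∀ p : ℝ → X, IsLocalGeodesic k p 0 ℓ → dist (p 0) (p ℓ) ≤ ℓ)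
    (fun ℓ hℓ p hp => ?_) (fun ℓ hℓk ih p hp => ?_) hℓ p hp
  · rw [hp.dist_eq ⟨le_rfl, hℓ.1⟩ ⟨hℓ.1, le_rfl⟩ hℓ.1 (by linarith [hℓ.2]), sub_zero]
  · have hmid : ℓ - k ∈ Icc 0 ℓ := ⟨by linarith, by linarith⟩
    calc dist (p 0) (p ℓ) ≤ dist (p 0) (p (ℓ - k)) + dist (p (ℓ - k)) (p ℓ) := dist_triangle ..
      _ ≤ (ℓ - k) + (ℓ - (ℓ - k)) := by
        gcongr
        · exact ih p (hp.mono (Icc_subset_Icc le_rfl hmid.2))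
        · exact (hp.dist_eq hmid ⟨by linarith, le_rfl⟩ hmid.2 (by linarith)).le
      _ = ℓ := by ring

theorem IsLocalGeodesic.dist_le (hk : 0 < k) {a b s t : ℝ} (hp : IsLocalGeodesic k p a b)
    (hs : s ∈ Icc a b) (ht : t ∈ Icc a b) : dist (p s) (p t) ≤ |s - t| := by
  wlog hst : s ≤ t generalizing s t
  · rw [dist_comm, abs_sub_comm]
    exact this ht hs (le_of_not_ge hst)
  simpa [abs_sub_comm s t, abs_of_nonneg (sub_nonneg.2 hst)] using
    (hp.shift hs ht).dist_le_of_zero hk (sub_nonneg.2 hst)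

theorem IsLocalGeodesic.continuousOn (hk : 0 < k) {a b : ℝ} (hp : IsLocalGeodesic k p a b) :
    ContinuousOn p (Icc a b) :=
  (LipschitzOnWith.of_dist_le_mul (K := 1) fun s hs t ht => by
    simpa [Real.dist_eq] using hp.dist_le hk hs ht).continuousOn

end LocalGeodesic

theorem exists_infDist_le_and_infDist_le {X : Type*} [MetricSpace X] {p : ℝ → X} {ℓ r : ℝ}
    (hℓ : 0 ≤ ℓ) (hp : ContinuousOn p (Icc 0 ℓ)) {A B : Set X} (hA : p 0 ∈ A) (hB : p ℓ ∈ B)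
    (hcover : ∀ s ∈ Icc 0 ℓ, infDist (p s) A ≤ r ∨ infDist (p s) B ≤ r) :
    ∃ s ∈ Icc 0 ℓ, infDist (p s) A ≤ r ∧ infDist (p s) B ≤ r := by
  set f := fun s => infDist (p s) A - infDist (p s) B
  have hf : ContinuousOn f (Icc 0 ℓ) :=
    ((continuous_infDist_pt A).comp_continuousOn hp).sub
      ((continuous_infDist_pt B).comp_continuousOn hp)
  have hsign : (0 : ℝ) ∈ Icc (f 0) (f ℓ) :=
    ⟨by simp [f, infDist_zero_of_mem hA, infDist_nonneg],
      by simp [f, infDist_zero_of_mem hB, infDist_nonneg]⟩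
  obtain ⟨s, hs, hfs⟩ := intermediate_value_Icc hℓ hf hsign
  have hAB : infDist (p s) A = infDist (p s) B := sub_eq_zero.1 hfs
  rcases hcover s hs with h | h
  · exact ⟨s, hs, h, hAB ▸ h⟩
  · exact ⟨s, hs, hAB ▸ h, h⟩

section Hyperbolic

variable {X : Type*} [MetricSpace X]

theorem IsGeodSegment.le_of_dist_le {S : Set X} {x a z w : X} {D r : ℝ}
    (hS : IsGeodSegment S x a) (hw : w ∈ S) (hzw : dist z w ≤ r) (hD : D ≤ dist z a)
    (hxa : dist x a = 0 ∨ (dist x a ≤ D ∧ 2 * r < dist x z)) : D ≤ r := by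
  have hsplit := hS.dist_add_dist hw
  have hzwa := dist_triangle z w a
  rcases hxa with hxa | ⟨hxaD, hxz⟩
  · linarith [dist_nonneg (x := x) (y := w), dist_nonneg (x := w) (y := a)]
  · linarith [dist_triangle x w z, dist_comm z w]

theorem DeltaSlimSpace.le_of_flanks (hgeo : GeodesicSpace X) {δ : ℝ} (hδ : 0 ≤ δ)
    (hhyp : DeltaSlimSpace X δ) {Q : Set X} {x₀ x₁ : X} (hQ : IsGeodSegment Q x₀ x₁)
    {S : Set X} {x y z : X} (hS : IsGeodSegment S x y) (hz : z ∈ S) {D : ℝ}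
    (hD : D ≤ infDist z Q) (hx : x ∈ Q ∨ (infDist x Q ≤ D ∧ 4 * δ < dist x z))
    (hy : y ∈ Q ∨ (infDist y Q ≤ D ∧ 4 * δ < dist y z)) : D ≤ 2 * δ := by
  have nearest : ∀ x', x' ∈ Q ∨ (infDist x' Q ≤ D ∧ 4 * δ < dist x' z) →
      ∃ a ∈ Q, dist x' a = 0 ∨ (dist x' a ≤ D ∧ 2 * (2 * δ) < dist x' z) := by
    rintro x' (hx' | ⟨hx'D, hx'z⟩)
    · exact ⟨x', hx', Or.inl (dist_self x')⟩
    · obtain ⟨a, ha, hda⟩ := hQ.isCompact.exists_infDist_eq_dist (nonempty_of_mem hQ.left_mem) x'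
      exact ⟨a, ha, Or.inr ⟨hda ▸ hx'D, by linarith⟩⟩
  have hDQ : ∀ a ∈ Q, D ≤ dist z a := fun a ha => hD.trans (infDist_le_dist_of_mem ha)
  obtain ⟨a, haQ, hxa⟩ := nearest x hx
  obtain ⟨b, hbQ, hyb⟩ := nearest y hy
  obtain ⟨T, hTQ, hT⟩ := hQ.exists_subsegment haQ hbQ
  obtain ⟨Gxa, hGxa⟩ := hgeo.exists_isGeodSegment x a
  obtain ⟨Gya, hGya⟩ := hgeo.exists_isGeodSegment y a
  obtain ⟨Gyb, hGyb⟩ := hgeo.exists_isGeodSegment y b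
  obtain ⟨w, hw | hw, hzw⟩ := hhyp.exists_dist_le hS hGya hGxa hz
  · obtain ⟨v, hv | hv, hwv⟩ := hhyp.exists_dist_le hGya hT hGyb hw
    · have hzv : dist z v ≤ 2 * δ := by linarith [dist_triangle z w v]
      exact (hDQ v (hTQ hv)).trans hzv
    · exact hGyb.le_of_dist_le hv (by linarith [dist_triangle z w v]) (hDQ b hbQ) hyb
  · exact hGxa.le_of_dist_le hw (by linarith) (hDQ a haQ) hxa

theorem IsLocalGeodesic.infDist_segment_le (hgeo : GeodesicSpace X) {δ : ℝ} (hδ : 0 ≤ δ)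
    (hhyp : DeltaSlimSpace X δ) {k : ℝ} (hk : 8 * δ < k) {p : ℝ → X} {ℓ : ℝ} (hℓ : 0 ≤ ℓ)
    (hp : IsLocalGeodesic k p 0 ℓ) {Q : Set X} (hQ : IsGeodSegment Q (p 0) (p ℓ)) {s : ℝ}
    (hs : s ∈ Icc 0 ℓ) : infDist (p s) Q ≤ 2 * δ := by
  obtain ⟨s₀, hs₀, hmax⟩ := isCompact_Icc.exists_isMaxOn (nonempty_Icc.2 hℓ)
    ((continuous_infDist_pt Q).comp_continuousOn (hp.continuousOn (by linarith)))
  refine (hmax hs).trans ?_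
  set s₁ := max 0 (s₀ - k / 2)
  set s₂ := min ℓ (s₀ + k / 2)
  have hs₁ : s₁ ∈ Icc 0 ℓ := ⟨le_max_left _ _, max_le hℓ (by linarith [hs₀.2])⟩
  have hs₂ : s₂ ∈ Icc 0 ℓ := ⟨le_min hℓ (by linarith [hs₀.1]), min_le_left _ _⟩
  have hs₁s₀ : s₁ ≤ s₀ := max_le hs₀.1 (by linarith)
  have hs₀s₂ : s₀ ≤ s₂ := le_min hs₀.2 (by linarith)
  have hS : IsGeodSegment (p '' Icc s₁ s₂) (p s₁) (p s₂) :=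
    (hp.isGeodParam (Icc_subset_Icc hs₁.1 hs₂.2)
      (by linarith [le_max_right 0 (s₀ - k / 2), min_le_right ℓ (s₀ + k / 2)])).isGeodSegment_image
      (hs₁s₀.trans hs₀s₂)
  refine hhyp.le_of_flanks hgeo hδ hQ hS (mem_image_of_mem p ⟨hs₁s₀, hs₀s₂⟩) le_rfl ?_ ?_
  · rcases le_total (s₀ - k / 2) 0 with h | h
    · left
      rw [show s₁ = 0 from max_eq_left h]
      exact hQ.left_mem
    · have e : s₁ = s₀ - k / 2 := max_eq_right h
      refine Or.inr ⟨hmax hs₁, ?_⟩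
      rw [hp.dist_eq hs₁ hs₀ hs₁s₀ (by linarith)]
      linarith
  · rcases le_total ℓ (s₀ + k / 2) with h | h
    · left
      rw [show s₂ = ℓ from min_eq_left h]
      exact hQ.symm.left_mem
    · have e : s₂ = s₀ + k / 2 := min_eq_right h
      refine Or.inr ⟨hmax hs₂, ?_⟩
      rw [dist_comm, hp.dist_eq hs₀ hs₂ hs₀s₂ (by linarith)]
      linarith

theorem IsLocalGeodesic.infDist_image_le (hgeo : GeodesicSpace X) {δ : ℝ} (hδ : 0 ≤ δ)
    (hhyp : DeltaSlimSpace X δ) {k : ℝ} (hk : 8 * δ < k) {p : ℝ → X} {ℓ : ℝ} (hℓ : 0 ≤ ℓ)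
    (hp : IsLocalGeodesic k p 0 ℓ) {q : ℝ → X} (hq : IsGeodParam q 0 (dist (p 0) (p ℓ)))
    (hq0 : q 0 = p 0) (hq1 : q (dist (p 0) (p ℓ)) = p ℓ) {t : ℝ}
    (ht : t ∈ Icc 0 (dist (p 0) (p ℓ))) : infDist (q t) (p '' Icc 0 ℓ) ≤ 3 * δ := by
  set L := dist (p 0) (p ℓ)
  have hQ : IsGeodSegment (q '' Icc 0 L) (p 0) (p ℓ) := ⟨q, hq, hq0, hq1, rfl⟩
  have hQ₁ : IsGeodSegment (q '' Icc 0 t) (q 0) (q t) :=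
    (hq.mono (Icc_subset_Icc le_rfl ht.2)).isGeodSegment_image ht.1
  have hQ₂ : IsGeodSegment (q '' Icc t L) (q t) (q L) :=
    (hq.mono (Icc_subset_Icc ht.1 le_rfl)).isGeodSegment_image ht.2
  have hcover : ∀ s ∈ Icc 0 ℓ,
      infDist (p s) (q '' Icc 0 t) ≤ 2 * δ ∨ infDist (p s) (q '' Icc t L) ≤ 2 * δ := by
    intro s hs
    obtain ⟨_, ⟨t', ht', rfl⟩, hd⟩ := hQ.isCompact.exists_dist_le_of_infDist_le
      (nonempty_of_mem hQ.left_mem) (hp.infDist_segment_le hgeo hδ hhyp hk hℓ hQ hs)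
    rcases le_total t' t with h | h
    · exact Or.inl (le_trans (infDist_le_dist_of_mem ⟨t', ⟨ht'.1, h⟩, rfl⟩) hd)
    · exact Or.inr (le_trans (infDist_le_dist_of_mem ⟨t', ⟨h, ht'.2⟩, rfl⟩) hd)
  obtain ⟨s, hs, h₁, h₂⟩ := exists_infDist_le_and_infDist_le hℓ (hp.continuousOn (by linarith))
    (hq0 ▸ hQ₁.left_mem) (hq1 ▸ hQ₂.symm.left_mem) hcover
  obtain ⟨_, ⟨t₁, ht₁, rfl⟩, hd₁⟩ :=
    hQ₁.isCompact.exists_dist_le_of_infDist_le (nonempty_of_mem hQ₁.left_mem) h₁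
  obtain ⟨_, ⟨t₂, ht₂, rfl⟩, hd₂⟩ :=
    hQ₂.isCompact.exists_dist_le_of_infDist_le (nonempty_of_mem hQ₂.left_mem) h₂
  have hT := hq.isGeodSegment_image_uIcc ⟨ht₁.1, ht₁.2.trans ht.2⟩ ⟨ht.1.trans ht₂.1, ht₂.2⟩
  obtain ⟨G₁, hG₁⟩ := hgeo.exists_isGeodSegment (q t₁) (p s)
  obtain ⟨G₂, hG₂⟩ := hgeo.exists_isGeodSegment (q t₂) (p s)
  obtain ⟨v, hv, hqv⟩ :=
    hhyp.exists_dist_le hT hG₂ hG₁ (mem_image_of_mem q (Icc_subset_uIcc ⟨ht₁.2, ht₂.1⟩))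
  have hvp : dist v (p s) ≤ 2 * δ := by
    rcases hv with hv | hv
    · exact (hG₂.dist_le hv).trans (dist_comm (p s) _ ▸ hd₂)
    · exact (hG₁.dist_le hv).trans (dist_comm (p s) _ ▸ hd₁)
  calc infDist (q t) (p '' Icc 0 ℓ) ≤ dist (q t) (p s) :=
        infDist_le_dist_of_mem (mem_image_of_mem p hs)
    _ ≤ dist (q t) v + dist v (p s) := dist_triangle ..
    _ ≤ 3 * δ := by linarith

theorem IsLocalGeodesic.le_mul_dist_add_of_zero (hgeo : GeodesicSpace X) {δ : ℝ} (hδ : 0 ≤ δ)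
    (hhyp : DeltaSlimSpace X δ) {k : ℝ} (hk : 8 * δ < k) {p : ℝ → X} {ℓ : ℝ} (hℓ : 0 ≤ ℓ)
    (hp : IsLocalGeodesic k p 0 ℓ) :
    ℓ ≤ (k + 4 * δ) / (k - 4 * δ) * dist (p 0) (p ℓ) + 2 * δ := by
  have hk4 : 0 < k - 4 * δ := by linarith
  set lam := (k + 4 * δ) / (k - 4 * δ)
  have hlam : lam * (k - 4 * δ) = k + 4 * δ := div_mul_cancel₀ _ hk4.ne'
  have hlam1 : 1 ≤ lam := (one_le_div hk4).2 (by linarith)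
  refine Real.forall_of_step (by linarith : 0 < k)
    (P := fun ℓ => ∀ p : ℝ → X, IsLocalGeodesic k p 0 ℓ → ℓ ≤ lam * dist (p 0) (p ℓ) + 2 * δ)
    (fun ℓ hℓ p hp => ?_) (fun ℓ hℓk ih p hp => ?_) hℓ p hp
  · rw [hp.dist_eq ⟨le_rfl, hℓ.1⟩ ⟨hℓ.1, le_rfl⟩ hℓ.1 (by linarith [hℓ.2]), sub_zero]
    nlinarith [hℓ.1]
  · set m := ℓ - k
    have hm : m ∈ Icc 0 ℓ := ⟨by linarith, by linarith⟩
    have IH := ih p (hp.mono (Icc_subset_Icc le_rfl hm.2))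
    obtain ⟨Q, hQ⟩ := hgeo.exists_isGeodSegment (p 0) (p ℓ)
    obtain ⟨a, ha, hma⟩ := hQ.isCompact.exists_dist_le_of_infDist_le
      (nonempty_of_mem hQ.left_mem) (hp.infDist_segment_le hgeo hδ hhyp hk (by linarith) hQ hm)
    have hmℓ : dist (p m) (p ℓ) = k := by
      rw [hp.dist_eq hm ⟨by linarith, le_rfl⟩ hm.2 (by linarith)]
      ring
    have hlower : dist (p 0) (p m) + (k - 4 * δ) ≤ dist (p 0) (p ℓ) := by
      linarith [hQ.dist_add_dist ha, dist_triangle (p 0) a (p m), dist_triangle (p m) a (p ℓ),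
        dist_comm a (p m)]
    nlinarith [mul_le_mul_of_nonneg_left hlower (by linarith : 0 ≤ lam)]

theorem IsLocalGeodesic.abs_sub_le_mul_dist_add (hgeo : GeodesicSpace X) {δ : ℝ} (hδ : 0 ≤ δ)
    (hhyp : DeltaSlimSpace X δ) {k : ℝ} (hk : 8 * δ < k) {p : ℝ → X} {a b s t : ℝ}
    (hp : IsLocalGeodesic k p a b) (hs : s ∈ Icc a b) (ht : t ∈ Icc a b) :
    |s - t| ≤ (k + 4 * δ) / (k - 4 * δ) * dist (p s) (p t) + 2 * δ := by
  wlog hst : s ≤ t generalizing s t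
  · rw [dist_comm, abs_sub_comm]
    exact this ht hs (le_of_not_ge hst)
  simpa [abs_sub_comm s t, abs_of_nonneg (sub_nonneg.2 hst)] using
    (hp.shift hs ht).le_mul_dist_add_of_zero hgeo hδ hhyp hk (sub_nonneg.2 hst)

end Hyperbolic

theorem stmt11 {X : Type*} [MetricSpace X] (hgeo : GeodesicSpace X)
    (δ : ℝ) (hδ : 0 ≤ δ) (hhyp : DeltaSlimSpace X δ)
    (k : ℝ) (hk : 8 * δ < k)
    (p : ℝ → X) (ℓ : ℝ) (hℓ : 0 ≤ ℓ) (hp : IsLocalGeodesic k p 0 ℓ)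
    (q : ℝ → X) (hq : IsGeodParam q 0 (dist (p 0) (p ℓ)))
    (hq0 : q 0 = p 0) (hq1 : q (dist (p 0) (p ℓ)) = p ℓ) :
    (∀ s ∈ Set.Icc (0 : ℝ) ℓ,
      Metric.infDist (p s) (q '' Set.Icc 0 (dist (p 0) (p ℓ))) ≤ 2 * δ) ∧
    (∀ t ∈ Set.Icc (0 : ℝ) (dist (p 0) (p ℓ)),
      Metric.infDist (q t) (p '' Set.Icc 0 ℓ) ≤ 3 * δ) ∧
    (∀ s ∈ Set.Icc (0 : ℝ) ℓ, ∀ t ∈ Set.Icc (0 : ℝ) ℓ,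
      |s - t| ≤ (k + 4 * δ) / (k - 4 * δ) * dist (p s) (p t) + 2 * δ) :=
  ⟨fun _ hs => hp.infDist_segment_le hgeo hδ hhyp hk hℓ ⟨q, hq, hq0, hq1, rfl⟩ hs,
    fun _ ht => hp.infDist_image_le hgeo hδ hhyp hk hℓ hq hq0 hq1 ht,
    fun _ hs _ ht => hp.abs_sub_le_mul_dist_add hgeo hδ hhyp hk hs ht⟩
end

section
/- Let X be a geodesic metric space. If every geodesic triangle in X has insize bounded above by δ', then every geodesic triangle is 3δ'-slim and 18δ'-thin. Conversely, if every geodesic triangle is δ-slim, then every geodesic triangle is 6δ-thin. -/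
/-- A geodesic triangle in `X` with vertices `A`, `B`, `C` and sides `p : A → B`,
`q : B → C`, `r : C → A`, each parametrized by arclength. -/
structure GeodTriangle (X : Type*) [MetricSpace X] where
  A : X
  B : X
  C : X
  p : ℝ → X
  q : ℝ → X
  r : ℝ → X
  hp : IsGeodParam p 0 (dist A B)
  hp0 : p 0 = A
  hp1 : p (dist A B) = B
  hq : IsGeodParam q 0 (dist B C)
  hq0 : q 0 = B
  hq1 : q (dist B C) = C
  hr : IsGeodParam r 0 (dist C A)
  hr0 : r 0 = C
  hr1 : r (dist C A) = A

namespace GeodTriangle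

variable {X : Type*} [MetricSpace X] (T : GeodTriangle X)

/-- The Gromov product of `B` and `C` at `A`. -/
noncomputable def gpA : ℝ := (dist T.A T.B + dist T.C T.A - dist T.B T.C) / 2

/-- The Gromov product of `A` and `C` at `B`. -/
noncomputable def gpB : ℝ := (dist T.A T.B + dist T.B T.C - dist T.C T.A) / 2

/-- The Gromov product of `A` and `B` at `C`. -/
noncomputable def gpC : ℝ := (dist T.B T.C + dist T.C T.A - dist T.A T.B) / 2

/-- The internal point on the side `AB` (at distance `(B·C)_A` from `A`). -/
noncomputable def OC : X := T.p T.gpA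

/-- The internal point on the side `BC` (at distance `(A·C)_B` from `B`). -/
noncomputable def OA : X := T.q T.gpB

/-- The internal point on the side `CA` (at distance `(A·B)_C` from `C`). -/
noncomputable def OB : X := T.r T.gpC

/-- The insize of the triangle `T` is at most `d`. -/
def InsizeLE (d : ℝ) : Prop :=
  dist T.OA T.OB ≤ d ∧ dist T.OB T.OC ≤ d ∧ dist T.OC T.OA ≤ d

/-- The triangle `T` is `d`-slim: each side lies in the `d`-neighborhood of the union of
the other two sides. -/
def IsSlim (d : ℝ) : Prop :=
  (∀ s ∈ Set.Icc (0 : ℝ) (dist T.A T.B),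
    Metric.infDist (T.p s)
      (T.q '' Set.Icc 0 (dist T.B T.C) ∪ T.r '' Set.Icc 0 (dist T.C T.A)) ≤ d) ∧
  (∀ s ∈ Set.Icc (0 : ℝ) (dist T.B T.C),
    Metric.infDist (T.q s)
      (T.p '' Set.Icc 0 (dist T.A T.B) ∪ T.r '' Set.Icc 0 (dist T.C T.A)) ≤ d) ∧
  (∀ s ∈ Set.Icc (0 : ℝ) (dist T.C T.A),
    Metric.infDist (T.r s)
      (T.p '' Set.Icc 0 (dist T.A T.B) ∪ T.q '' Set.Icc 0 (dist T.B T.C)) ≤ d)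

/-- The triangle `T` is `d`-thin: points on the two sides adjacent to a common vertex at
equal distance from that vertex, within the internal-point segments, are at distance at
most `d` from each other. -/
def IsThin (d : ℝ) : Prop :=
  (∀ s ∈ Set.Icc (0 : ℝ) T.gpA, dist (T.p s) (T.r (dist T.C T.A - s)) ≤ d) ∧
  (∀ s ∈ Set.Icc (0 : ℝ) T.gpB, dist (T.p (dist T.A T.B - s)) (T.q s) ≤ d) ∧
  (∀ s ∈ Set.Icc (0 : ℝ) T.gpC, dist (T.q (dist T.B T.C - s)) (T.r s) ≤ d)

end GeodTriangle

/-! Insize ⇒ slim. Let `x` be the point of `AB` at distance `s ≤ (B·C)_A` from `A`. Going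
through `O_C` and `O_B` shows `d(x, C) ≤ ((B·C)_A - s) + δ + (A·B)_C`, so in the triangle `A x C`
(with a new geodesic `xC`) the internal point of `xC` is within `δ/2` of `x`; it is `δ`-close to
the internal point of `CA`. Points of `AB` beyond `O_C` are handled by reflecting the triangle,
the other sides by rotating it.

Slim ⇒ thin. A point `δ`-close to a geodesic issuing from `v` is `2δ`-close to the point of the
geodesic at the same distance from `v`. Applied to `O_C` and `O_B` this gives
`d(O_C, O_B) ≤ 4δ`. A point `x` of `AB` at distance `s ≤ (B·C)_A` from `A` is `δ`-close to
`CA`, and then `2δ`-close to its partner on `CA`, or to `BC`, and then `(B·C)_A - s ≤ δ`, so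
the path through `O_C` and `O_B` has length at most `6δ`. -/

open Set Metric

section

variable {X : Type*} [MetricSpace X]

namespace IsGeodParam

variable {p : ℝ → X} {a b s t : ℝ}

lemma lipschitzOnWith_s17 (hp : IsGeodParam p a b) : LipschitzOnWith 1 p (Icc a b) :=
  LipschitzOnWith.of_dist_le_mul fun s hs t ht => by
    rw [hp s hs t ht, NNReal.coe_one, one_mul, Real.dist_eq]

lemma isCompact_image (hp : IsGeodParam p a b) : IsCompact (p '' Icc a b) :=
  isCompact_Icc.image_of_continuousOn hp.lipschitzOnWith_s17.continuousOn

lemma mono_s17 {c : ℝ} (hp : IsGeodParam p a b) (hcb : c ≤ b) : IsGeodParam p a c :=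
  fun s hs t ht => hp s ⟨hs.1, hs.2.trans hcb⟩ t ⟨ht.1, ht.2.trans hcb⟩

lemma reverse (hp : IsGeodParam p 0 b) : IsGeodParam (fun t => p (b - t)) 0 b := by
  intro s hs t ht
  rw [hp _ ⟨by linarith [hs.2], by linarith [hs.1]⟩ _
      ⟨by linarith [ht.2], by linarith [ht.1]⟩,
    show b - s - (b - t) = -(s - t) by ring, abs_neg]

lemma dist_left (hp : IsGeodParam p a b) (hs : s ∈ Icc a b) : dist (p a) (p s) = s - a := by
  rw [hp a (left_mem_Icc.2 (hs.1.trans hs.2)) s hs, abs_sub_comm,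
    abs_of_nonneg (sub_nonneg.2 hs.1)]

lemma dist_right (hp : IsGeodParam p a b) (hs : s ∈ Icc a b) : dist (p s) (p b) = b - s := by
  rw [hp s hs b (right_mem_Icc.2 (hs.1.trans hs.2)), abs_sub_comm,
    abs_of_nonneg (sub_nonneg.2 hs.2)]

lemma dist_apply_le_two_mul (hp : IsGeodParam p 0 b) {x : X} {c δ : ℝ} (ht : t ∈ Icc 0 b)
    (hxt : dist x (p t) ≤ δ) (hc : dist (p 0) x = c) (hcb : c ≤ b) :
    dist x (p c) ≤ 2 * δ := by
  have hc0 : 0 ≤ c := hc ▸ dist_nonneg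
  have htc : dist (p t) (p c) ≤ δ := by
    calc dist (p t) (p c) = |dist (p t) (p 0) - dist x (p 0)| := by
          rw [hp t ht c ⟨hc0, hcb⟩, dist_comm, hp.dist_left ht, dist_comm, hc, sub_zero]
      _ ≤ dist (p t) x := abs_dist_sub_le _ _ _
      _ ≤ δ := by rwa [dist_comm]
  calc dist x (p c) ≤ dist x (p t) + dist (p t) (p c) := dist_triangle _ _ _
    _ ≤ 2 * δ := by linarith

lemma dist_apply_sub_le_two_mul (hp : IsGeodParam p 0 b) {x : X} {c δ : ℝ} (ht : t ∈ Icc 0 b)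
    (hxt : dist x (p t) ≤ δ) (hc : dist (p b) x = c) (hcb : c ≤ b) :
    dist x (p (b - c)) ≤ 2 * δ :=
  hp.reverse.dist_apply_le_two_mul (t := b - t) ⟨by linarith [ht.2], by linarith [ht.1]⟩
    (by rwa [sub_sub_cancel]) (by rwa [sub_zero]) hcb

lemma exists_dist_le_of_infDist_image_union_le {q : ℝ → X} {c d : ℝ} {x : X}
    (hp : IsGeodParam p 0 b) (hq : IsGeodParam q 0 c) (hb : 0 ≤ b)
    (h : infDist x (p '' Icc 0 b ∪ q '' Icc 0 c) ≤ d) :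
    (∃ t ∈ Icc 0 b, dist x (p t) ≤ d) ∨ (∃ t ∈ Icc 0 c, dist x (q t) ≤ d) := by
  obtain ⟨y, hy, hxy⟩ := (hp.isCompact_image.union hq.isCompact_image).exists_infDist_eq_dist
    ⟨p 0, .inl ⟨0, left_mem_Icc.2 hb, rfl⟩⟩ x
  rcases hy with ⟨t, ht, rfl⟩ | ⟨t, ht, rfl⟩
  exacts [.inl ⟨t, ht, hxy ▸ h⟩, .inr ⟨t, ht, hxy ▸ h⟩]

end IsGeodParam

namespace GeodTriangle

variable (T : GeodTriangle X) {δ : ℝ}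

lemma gpA_add_gpB : T.gpA + T.gpB = dist T.A T.B := by unfold gpA gpB; ring
lemma gpB_add_gpC : T.gpB + T.gpC = dist T.B T.C := by unfold gpB gpC; ring
lemma gpA_add_gpC : T.gpA + T.gpC = dist T.C T.A := by unfold gpA gpC; ring

lemma gpA_nonneg : 0 ≤ T.gpA := by
  have := dist_triangle T.B T.A T.C
  rw [dist_comm T.B T.A, dist_comm T.A T.C] at this; unfold gpA; linarith
lemma gpB_nonneg : 0 ≤ T.gpB := by
  have := dist_triangle T.C T.B T.A
  rw [dist_comm T.C T.B, dist_comm T.B T.A] at this; unfold gpB; linarith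
lemma gpC_nonneg : 0 ≤ T.gpC := by
  have := dist_triangle T.A T.C T.B
  rw [dist_comm T.A T.C, dist_comm T.C T.B] at this; unfold gpC; linarith

lemma gpA_le_AB : T.gpA ≤ dist T.A T.B := by linarith [T.gpA_add_gpB, T.gpB_nonneg]
lemma gpA_le_CA : T.gpA ≤ dist T.C T.A := by linarith [T.gpA_add_gpC, T.gpC_nonneg]
lemma gpB_le_BC : T.gpB ≤ dist T.B T.C := by linarith [T.gpB_add_gpC, T.gpC_nonneg]
lemma gpC_le_CA : T.gpC ≤ dist T.C T.A := by linarith [T.gpA_add_gpC, T.gpA_nonneg]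

lemma dist_A_p {s : ℝ} (hs : s ∈ Icc 0 (dist T.A T.B)) : dist T.A (T.p s) = s := by
  rw [← T.hp0, T.hp.dist_left hs, sub_zero]

lemma dist_B_q {s : ℝ} (hs : s ∈ Icc 0 (dist T.B T.C)) : dist T.B (T.q s) = s := by
  rw [← T.hq0, T.hq.dist_left hs, sub_zero]

lemma dist_q_C {s : ℝ} (hs : s ∈ Icc 0 (dist T.B T.C)) :
    dist (T.q s) T.C = dist T.B T.C - s := by
  have := T.hq.dist_right hs
  rwa [T.hq1] at this

lemma dist_C_r {s : ℝ} (hs : s ∈ Icc 0 (dist T.C T.A)) : dist T.C (T.r s) = s := by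
  rw [← T.hr0, T.hr.dist_left hs, sub_zero]

lemma dist_p_OC {s : ℝ} (hs : s ∈ Icc 0 T.gpA) : dist (T.p s) T.OC = T.gpA - s := by
  rw [OC, (T.hp.mono_s17 T.gpA_le_AB).dist_right hs]

lemma dist_OC_B : dist T.OC T.B = T.gpB := by
  have := T.hp.dist_right ⟨T.gpA_nonneg, T.gpA_le_AB⟩
  rw [T.hp1] at this
  rw [OC, this]
  linarith [T.gpA_add_gpB]

lemma dist_OB_r {s : ℝ} (hs : s ∈ Icc 0 T.gpA) :
    dist T.OB (T.r (dist T.C T.A - s)) = T.gpA - s := by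
  rw [OB, T.hr _ ⟨T.gpC_nonneg, T.gpC_le_CA⟩ _
      ⟨by linarith [hs.2, T.gpA_le_CA], by linarith [hs.1]⟩,
    show T.gpC - (dist T.C T.A - s) = s - T.gpA by linarith [T.gpA_add_gpC], abs_sub_comm,
    abs_of_nonneg (sub_nonneg.2 hs.2)]

lemma dist_OB_C : dist T.OB T.C = T.gpC := by
  rw [OB, dist_comm, T.dist_C_r ⟨T.gpC_nonneg, T.gpC_le_CA⟩]

lemma gpA_le_dist_A_q {t : ℝ} (ht : t ∈ Icc 0 (dist T.B T.C)) : T.gpA ≤ dist T.A (T.q t) := by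
  have hB := dist_triangle T.A (T.q t) T.B
  have hC := dist_triangle T.C (T.q t) T.A
  rw [dist_comm (T.q t) T.B, T.dist_B_q ht] at hB
  rw [dist_comm T.C (T.q t), T.dist_q_C ht, dist_comm (T.q t) T.A] at hC
  unfold gpA; linarith

def rot : GeodTriangle X where
  A := T.B
  B := T.C
  C := T.A
  p := T.q
  q := T.r
  r := T.p
  hp := T.hq
  hp0 := T.hq0
  hp1 := T.hq1
  hq := T.hr
  hq0 := T.hr0
  hq1 := T.hr1
  hr := T.hp
  hr0 := T.hp0
  hr1 := T.hp1

lemma rot_gpA : T.rot.gpA = T.gpB := by simp only [gpA, gpB, rot]; ring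
lemma rot_gpB : T.rot.gpB = T.gpC := rfl

@[simp] lemma rot_OC : T.rot.OC = T.OA := by rw [OC, rot_gpA]; rfl
@[simp] lemma rot_OA : T.rot.OA = T.OB := by rw [OA, rot_gpB]; rfl
@[simp] lemma rot_OB : T.rot.OB = T.OC := by
  rw [OB, show T.rot.gpC = T.gpA by simp only [gpC, gpA, rot]; ring]; rfl

noncomputable def mirror : GeodTriangle X where
  A := T.B
  B := T.A
  C := T.C
  p := fun t => T.p (dist T.A T.B - t)
  q := fun t => T.r (dist T.C T.A - t)
  r := fun t => T.q (dist T.B T.C - t)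
  hp := dist_comm T.A T.B ▸ T.hp.reverse
  hp0 := by simp only [sub_zero, T.hp1]
  hp1 := by simp only [dist_comm T.B T.A, sub_self, T.hp0]
  hq := dist_comm T.C T.A ▸ T.hr.reverse
  hq0 := by simp only [sub_zero, T.hr1]
  hq1 := by simp only [dist_comm T.A T.C, sub_self, T.hr0]
  hr := dist_comm T.B T.C ▸ T.hq.reverse
  hr0 := by simp only [sub_zero, T.hq1]
  hr1 := by simp only [dist_comm T.C T.B, sub_self, T.hq0]

lemma mirror_gpA : T.mirror.gpA = T.gpB := by
  unfold gpA gpB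
  change (dist T.B T.A + dist T.C T.B - dist T.A T.C) / 2 = _
  rw [dist_comm T.B T.A, dist_comm T.C T.B, dist_comm T.A T.C]

noncomputable def subTri {s : ℝ} (hs : s ∈ Icc 0 (dist T.A T.B)) (g : ℝ → X)
    (hg : IsGeodParam g 0 (dist (T.p s) T.C)) (hg0 : g 0 = T.p s)
    (hg1 : g (dist (T.p s) T.C) = T.C) : GeodTriangle X where
  A := T.A
  B := T.p s
  C := T.C
  p := T.p
  q := g
  r := T.r
  hp := by rw [T.dist_A_p hs]; exact T.hp.mono_s17 hs.2
  hp0 := T.hp0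
  hp1 := by rw [T.dist_A_p hs]
  hq := hg
  hq0 := hg0
  hq1 := hg1
  hr := T.hr
  hr0 := T.hr0
  hr1 := T.hr1

section Insize

variable {T}

lemma InsizeLE.nonneg (h : T.InsizeLE δ) : 0 ≤ δ := dist_nonneg.trans h.1

variable (T)

lemma exists_dist_p_r_le (hgeo : GeodesicSpace X) (H : ∀ T' : GeodTriangle X, T'.InsizeLE δ)
    {s : ℝ} (hs : s ∈ Icc 0 T.gpA) :
    ∃ t ∈ Icc 0 (dist T.C T.A), dist (T.p s) (T.r t) ≤ 3 / 2 * δ := by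
  have hsAB : s ∈ Icc 0 (dist T.A T.B) := ⟨hs.1, hs.2.trans T.gpA_le_AB⟩
  obtain ⟨g, hg, hg0, hg1⟩ := hgeo (T.p s) T.C
  let T₁ := T.subTri hsAB g hg hg0 hg1
  refine ⟨T₁.gpC, ⟨T₁.gpC_nonneg, T₁.gpC_le_CA⟩, ?_⟩
  have hxC : dist (T.p s) T.C ≤ (T.gpA - s) + δ + T.gpC := by
    calc dist (T.p s) T.C ≤ dist (T.p s) T.OC + dist T.OC T.OB + dist T.OB T.C :=
          dist_triangle4 _ _ _ _
      _ ≤ (T.gpA - s) + δ + T.gpC := by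
          rw [T.dist_p_OC hs, T.dist_OB_C, dist_comm]; linarith [(H T).2.1]
  have hgpB₁ : T₁.gpB ≤ δ / 2 := by
    change (dist T.A (T.p s) + dist (T.p s) T.C - dist T.C T.A) / 2 ≤ δ / 2
    linarith [T.dist_A_p hsAB, T.gpA_add_gpC]
  calc dist (T.p s) (T.r T₁.gpC) ≤ dist T₁.B T₁.OA + dist T₁.OA T₁.OB := dist_triangle _ _ _
    _ ≤ δ / 2 + δ := by
        rw [OA, T₁.dist_B_q ⟨T₁.gpB_nonneg, T₁.gpB_le_BC⟩]; exact add_le_add hgpB₁ (H T₁).1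
    _ = 3 / 2 * δ := by ring

lemma infDist_p_le (hgeo : GeodesicSpace X) (H : ∀ T' : GeodTriangle X, T'.InsizeLE δ)
    {s : ℝ} (hs : s ∈ Icc 0 (dist T.A T.B)) :
    infDist (T.p s) (T.q '' Icc 0 (dist T.B T.C) ∪ T.r '' Icc 0 (dist T.C T.A)) ≤ 3 * δ := by
  have hδ := (H T).nonneg
  rcases le_total s T.gpA with hsA | hsA
  · obtain ⟨t, ht, hd⟩ := T.exists_dist_p_r_le hgeo H ⟨hs.1, hsA⟩
    exact (infDist_le_dist_of_mem (mem_union_right _ (mem_image_of_mem _ ht))).trans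
      (by linarith)
  · obtain ⟨t, ht, hd⟩ := T.mirror.exists_dist_p_r_le hgeo H (s := dist T.A T.B - s)
      ⟨by linarith [hs.2], by rw [mirror_gpA]; linarith [T.gpA_add_gpB]⟩
    change dist (T.p (dist T.A T.B - (dist T.A T.B - s))) (T.q (dist T.B T.C - t)) ≤ _
      at hd
    change t ∈ Icc 0 (dist T.C T.B) at ht
    rw [sub_sub_cancel] at hd
    rw [dist_comm] at ht
    have ht' : dist T.B T.C - t ∈ Icc 0 (dist T.B T.C) :=
      ⟨by linarith [ht.2], by linarith [ht.1]⟩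
    exact (infDist_le_dist_of_mem (mem_union_left _ (mem_image_of_mem _ ht'))).trans
      (by linarith)

lemma isSlim_of_forall_insizeLE (hgeo : GeodesicSpace X)
    (H : ∀ T' : GeodTriangle X, T'.InsizeLE δ) : T.IsSlim (3 * δ) :=
  ⟨fun _ => T.infDist_p_le hgeo H, fun _ hs => union_comm _ _ ▸ T.rot.infDist_p_le hgeo H hs,
    fun _ => T.rot.rot.infDist_p_le hgeo H⟩

end Insize

section Slim

variable {T}

lemma IsSlim.nonneg (h : T.IsSlim δ) : 0 ≤ δ :=
  infDist_nonneg.trans (h.1 0 ⟨le_rfl, dist_nonneg⟩)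

lemma IsSlim.rot (h : T.IsSlim δ) : T.rot.IsSlim δ :=
  ⟨fun s hs => union_comm (T.p '' _) _ ▸ h.2.1 s hs,
    fun s hs => union_comm (T.p '' _) _ ▸ h.2.2 s hs, h.1⟩

lemma IsSlim.dist_OC_le (h : T.IsSlim δ) :
    dist T.OC T.OA ≤ 2 * δ ∨ dist T.OC T.OB ≤ 2 * δ := by
  rcases T.hq.exists_dist_le_of_infDist_image_union_le T.hr dist_nonneg
    (h.1 T.gpA ⟨T.gpA_nonneg, T.gpA_le_AB⟩) with ⟨t, ht, hd⟩ | ⟨t, ht, hd⟩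
  · exact .inl (T.hq.dist_apply_le_two_mul ht hd (by rw [T.hq0, dist_comm, T.dist_OC_B])
      T.gpB_le_BC)
  · have hOC : dist (T.r (dist T.C T.A)) T.OC = T.gpA := by
      rw [T.hr1, OC, T.dist_A_p ⟨T.gpA_nonneg, T.gpA_le_AB⟩]
    have := T.hr.dist_apply_sub_le_two_mul ht hd hOC T.gpA_le_CA
    rw [show dist T.C T.A - T.gpA = T.gpC by linarith [T.gpA_add_gpC]] at this
    exact .inr this

lemma IsSlim.dist_OC_OB_le (h : T.IsSlim δ) : dist T.OC T.OB ≤ 4 * δ := by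
  have hB := h.rot.rot.dist_OC_le
  simp only [rot_OC, rot_OA, rot_OB] at hB
  rcases h.dist_OC_le with hC | hC <;> rcases hB with hB | hB <;>
    linarith [dist_triangle T.OC T.OA T.OB, dist_comm T.OA T.OB, dist_comm T.OB T.OC, h.nonneg]

lemma IsSlim.dist_p_r_le (h : T.IsSlim δ) {s : ℝ} (hs : s ∈ Icc 0 T.gpA) :
    dist (T.p s) (T.r (dist T.C T.A - s)) ≤ 6 * δ := by
  have hsAB : s ∈ Icc 0 (dist T.A T.B) := ⟨hs.1, hs.2.trans T.gpA_le_AB⟩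
  rcases T.hq.exists_dist_le_of_infDist_image_union_le T.hr dist_nonneg (h.1 s hsAB)
    with ⟨t, ht, hd⟩ | ⟨t, ht, hd⟩
  · have hgpA : T.gpA - s ≤ δ := by
      have := dist_triangle T.A (T.p s) (T.q t)
      linarith [T.gpA_le_dist_A_q ht, T.dist_A_p hsAB]
    calc dist (T.p s) (T.r (dist T.C T.A - s))
        ≤ dist (T.p s) T.OC + dist T.OC T.OB + dist T.OB (T.r (dist T.C T.A - s)) :=
          dist_triangle4 _ _ _ _
      _ ≤ 6 * δ := by
          rw [T.dist_p_OC hs, T.dist_OB_r hs]; linarith [h.dist_OC_OB_le]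
  · have hx : dist (T.r (dist T.C T.A)) (T.p s) = s := by rw [T.hr1, T.dist_A_p hsAB]
    linarith [T.hr.dist_apply_sub_le_two_mul ht hd hx (hs.2.trans T.gpA_le_CA), h.nonneg]

lemma IsSlim.isThin (h : T.IsSlim δ) : T.IsThin (6 * δ) := by
  refine ⟨fun s hs => h.dist_p_r_le hs, fun s hs => ?_, fun s hs => ?_⟩
  · rw [dist_comm]; exact h.rot.dist_p_r_le (by rwa [rot_gpA])
  · rw [dist_comm]; exact h.rot.rot.dist_p_r_le (by rwa [rot_gpA, rot_gpB])

end Slim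

end GeodTriangle

end

theorem stmt17 {X : Type*} [MetricSpace X] (hgeo : GeodesicSpace X) :
    (∀ δ' : ℝ, 0 ≤ δ' → (∀ T : GeodTriangle X, T.InsizeLE δ') →
      ∀ T : GeodTriangle X, T.IsSlim (3 * δ') ∧ T.IsThin (18 * δ')) ∧
    (∀ δ : ℝ, 0 ≤ δ → (∀ T : GeodTriangle X, T.IsSlim δ) →
      ∀ T : GeodTriangle X, T.IsThin (6 * δ)) := by
  refine ⟨fun δ' _ H T => ⟨T.isSlim_of_forall_insizeLE hgeo H, ?_⟩,
    fun δ _ hslim T => (hslim T).isThin⟩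
  rw [show (18 : ℝ) * δ' = 6 * (3 * δ') by ring]
  exact (T.isSlim_of_forall_insizeLE hgeo H).isThin
end
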